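/- arXiv:2105.10743 — 6 statements merged into one kernel-verified Lean document; each statement's English description precedes it below -/
import Mathlib

section
/- For all m, n ≥ 2, the expected number of Column's strictly undominated actions satisfies the recurrence E[U^C(m,n)] = Σ_{k=1}^n E[U^C(m−1,k)]/k, and E[U^C(m,n)] is strictly increasing in each of m and n. -/
open Finset Filter

noncomputable section

/-- Row action `i` is strictly dominated in the restricted game with Row actions `X`
and Column actions `Y`, for Row payoff matrix `R`. -/
def RowDomIn {m n : ℕ} (R : Fin m → Fin n → ℝ) (X : Finset (Fin m)) (Y : Finset (Fin n))
    (i : Fin m) : Prop :=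
  ∃ i' ∈ X, ∀ j ∈ Y, R i j < R i' j

/-- Column action `j` is strictly dominated in the restricted game with Row actions `X`
and Column actions `Y`, for Column payoff matrix `C`. -/
def ColDomIn {m n : ℕ} (C : Fin m → Fin n → ℝ) (X : Finset (Fin m)) (Y : Finset (Fin n))
    (j : Fin n) : Prop :=
  ∃ j' ∈ Y, ∀ i ∈ X, C i j < C i j'

open Classical in
/-- One round of iterated elimination: simultaneously delete every strictly dominated
action of both players in the current restricted game. -/
def elimStep {m n : ℕ} (R C : Fin m → Fin n → ℝ)
    (p : Finset (Fin m) × Finset (Fin n)) : Finset (Fin m) × Finset (Fin n) :=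
  (p.1.filter fun i => ¬ RowDomIn R p.1 p.2 i,
   p.2.filter fun j => ¬ ColDomIn C p.1 p.2 j)

/-- Surviving actions of the subgame `(p.1, p.2)` after iterated elimination of strictly
dominated actions (iterating `m + n` times surely reaches the fixed point). -/
def survivorsFrom {m n : ℕ} (R C : Fin m → Fin n → ℝ)
    (p : Finset (Fin m) × Finset (Fin n)) : Finset (Fin m) × Finset (Fin n) :=
  (elimStep R C)^[m + n] p

/-- The subgame `(p.1, p.2)` is strict-dominance solvable: exactly one action of each
player survives iterated elimination of strictly dominated actions. -/
def SolvableFrom {m n : ℕ} (R C : Fin m → Fin n → ℝ)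
    (p : Finset (Fin m) × Finset (Fin n)) : Prop :=
  (survivorsFrom R C p).1.card = 1 ∧ (survivorsFrom R C p).2.card = 1

/-- Surviving actions of the full game after iterated elimination. -/
def survivors {m n : ℕ} (R C : Fin m → Fin n → ℝ) : Finset (Fin m) × Finset (Fin n) :=
  survivorsFrom R C (Finset.univ, Finset.univ)

/-- The game is strict-dominance solvable. -/
def Solvable {m n : ℕ} (R C : Fin m → Fin n → ℝ) : Prop :=
  SolvableFrom R C (Finset.univ, Finset.univ)

/-- The number of rounds performed by the iterated elimination procedure:
the least `k` such that round `k + 1` deletes nothing more. -/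
def elimRounds {m n : ℕ} (R C : Fin m → Fin n → ℝ) : ℕ :=
  sInf {k | (elimStep R C)^[k + 1] (Finset.univ, Finset.univ)
          = (elimStep R C)^[k] (Finset.univ, Finset.univ)}

/-- Sample space of the random game `G(m,n)`: for each Column action an i.i.d. uniform
permutation giving Row's ordinal payoffs in that column, and for each Row action an
i.i.d. uniform permutation giving Column's ordinal payoffs in that row. -/
abbrev Omega (m n : ℕ) := (Fin n → Equiv.Perm (Fin m)) × (Fin m → Equiv.Perm (Fin n))

/-- Row's payoff matrix of the realized game. -/
def RPay {m n : ℕ} (ω : Omega m n) : Fin m → Fin n → ℝ := fun i j => ((ω.1 j) i : ℕ)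

/-- Column's payoff matrix of the realized game. -/
def CPay {m n : ℕ} (ω : Omega m n) : Fin m → Fin n → ℝ := fun i j => ((ω.2 i) j : ℕ)

/-- Probability of an event under the uniform distribution on `Omega m n`
(i.e. all `m + n` permutations uniform and mutually independent). -/
def Pr {m n : ℕ} (E : Set (Omega m n)) : ℝ :=
  (E.toFinite.toFinset.card : ℝ) / (Fintype.card (Omega m n) : ℝ)

open Classical in
/-- Number of Row actions that are not strictly dominated. -/
def UR {m n : ℕ} (ω : Omega m n) : ℕ :=
  (Finset.univ.filter fun i => ¬ RowDomIn (RPay ω) Finset.univ Finset.univ i).card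

open Classical in
/-- Number of Column actions that are not strictly dominated. -/
def UC {m n : ℕ} (ω : Omega m n) : ℕ :=
  (Finset.univ.filter fun j => ¬ ColDomIn (CPay ω) Finset.univ Finset.univ j).card

/-- Number of Row actions surviving iterated elimination. -/
def SR {m n : ℕ} (ω : Omega m n) : ℕ := (survivors (RPay ω) (CPay ω)).1.card

/-- Number of Column actions surviving iterated elimination. -/
def SC {m n : ℕ} (ω : Omega m n) : ℕ := (survivors (RPay ω) (CPay ω)).2.card

/-- The realized game is strict-dominance solvable. -/
def GameSolvable {m n : ℕ} (ω : Omega m n) : Prop := Solvable (RPay ω) (CPay ω)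

/-- Number of rounds of the iterated elimination procedure in the realized game. -/
def GameRounds {m n : ℕ} (ω : Omega m n) : ℕ := elimRounds (RPay ω) (CPay ω)

/-- `π(m,n)`: probability that the random game `G(m,n)` is strict-dominance solvable. -/
def probSolvable (m n : ℕ) : ℝ := Pr {ω : Omega m n | GameSolvable ω}

/-- Expected number of Column's strictly undominated actions, `E[U^C(m,n)]`. -/
def expUC (m n : ℕ) : ℝ :=
  (∑ ω : Omega m n, (UC ω : ℝ)) / (Fintype.card (Omega m n) : ℝ)

/-- Expected number of Column actions surviving iterated elimination, `E[S^C(m,n)]`. -/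
def expSC (m n : ℕ) : ℝ :=
  (∑ ω : Omega m n, (SC ω : ℝ)) / (Fintype.card (Omega m n) : ℝ)

open Classical in
/-- `E[I(m,n)]`: expected number of elimination rounds conditional on the game being
strict-dominance solvable. -/
def condExpRounds (m n : ℕ) : ℝ :=
  (∑ ω : Omega m n, if GameSolvable ω then (GameRounds ω : ℝ) else 0) /
    (∑ ω : Omega m n, if GameSolvable ω then (1 : ℝ) else 0)

/-- Unsigned Stirling numbers of the first kind. -/
def stirling1 : ℕ → ℕ → ℕ
  | 0, 0 => 1
  | 0, _ + 1 => 0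
  | _ + 1, 0 => 0
  | n + 1, k + 1 => n * stirling1 n (k + 1) + stirling1 n k

end


noncomputable section Auxiliary

open scoped Nat

namespace AuxUC

open Classical in
/-- Column `j` is strictly undominated in the game given by permutations `σ`. -/
def Undom {M n : ℕ} (σ : Fin M → Equiv.Perm (Fin n)) (j : Fin n) : Prop :=
  ∀ j', j' ≠ j → ∃ i, σ i j' < σ i j

open Classical in
noncomputable def cntU {M n : ℕ} (σ : Fin M → Equiv.Perm (Fin n)) : ℕ :=
  (Finset.univ.filter fun j => Undom σ j).card

noncomputable def Acnt (M n : ℕ) : ℕ := ∑ σ : Fin M → Equiv.Perm (Fin n), cntU σ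

open Classical in
noncomputable def Ncnt (M n : ℕ) (j : Fin n) : ℕ :=
  (Finset.univ.filter fun σ : Fin M → Equiv.Perm (Fin n) => Undom σ j).card

section Pattern

variable {n k : ℕ}

/-- The relative-order pattern of `τ` on the embedded copy of `Fin k`. -/
noncomputable def pat (e : Fin k ↪ Fin n) (τ : Equiv.Perm (Fin n)) : Equiv.Perm (Fin k) :=
  Equiv.ofBijective
    (fun a => ((univ.map (e.trans τ.toEmbedding)).orderIsoOfFin (by simp)).symm
        ⟨τ (e a), by simp [Finset.mem_map]⟩)
    (Finite.injective_iff_bijective.mp fun a b hab => by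
      have h1 := congrArg (((univ.map (e.trans τ.toEmbedding)).orderIsoOfFin (by simp)) ·) hab
      simp only [OrderIso.apply_symm_apply] at h1
      have h2 : τ (e a) = τ (e b) := congrArg Subtype.val h1
      exact e.injective (τ.injective h2))

lemma pat_lt_iff (e : Fin k ↪ Fin n) (τ : Equiv.Perm (Fin n)) (a b : Fin k) :
    pat e τ a < pat e τ b ↔ τ (e a) < τ (e b) := by
  show ((univ.map (e.trans τ.toEmbedding)).orderIsoOfFin (by simp)).symm _ <
    ((univ.map (e.trans τ.toEmbedding)).orderIsoOfFin (by simp)).symm _ ↔ _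
  rw [OrderIso.lt_iff_lt]
  exact Subtype.mk_lt_mk

lemma perm_eq_of_lt_iff {k : ℕ} (ρ ρ' : Equiv.Perm (Fin k))
    (h : ∀ a b, ρ a < ρ b ↔ ρ' a < ρ' b) : ρ = ρ' := by
  have hf : StrictMono (fun x => ρ' (ρ.symm x)) := by
    intro x y hxy
    have := (h (ρ.symm x) (ρ.symm y)).mp (by simpa using hxy)
    exact this
  have hid : (fun x => ρ' (ρ.symm x)) = (id : Fin k → Fin k) := by
    haveI : WellFoundedLT (Fin k) := inferInstance
    refine (StrictMono.range_inj hf strictMono_id).mp ?_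
    rw [Set.range_id]
    exact Set.range_eq_univ.mpr fun x => ⟨ρ (ρ'.symm x), by simp⟩
  have key : ∀ a, ρ' a = ρ a := by
    intro a
    have := congrFun hid (ρ a)
    simpa using this
  exact (Equiv.ext fun a => (key a).symm)

lemma pat_mul (e : Fin k ↪ Fin n) (τ : Equiv.Perm (Fin n)) (g : Equiv.Perm (Fin k)) :
    pat e (τ * g.viaFintypeEmbedding e) = pat e τ * g := by
  classical
  apply perm_eq_of_lt_iff
  intro a b
  rw [pat_lt_iff]
  have ha : (τ * g.viaFintypeEmbedding e) (e a) = τ (e (g a)) := by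
    rw [Equiv.Perm.mul_apply, Equiv.Perm.viaFintypeEmbedding_apply_image]
  have hb : (τ * g.viaFintypeEmbedding e) (e b) = τ (e (g b)) := by
    rw [Equiv.Perm.mul_apply, Equiv.Perm.viaFintypeEmbedding_apply_image]
  rw [ha, hb]
  exact (pat_lt_iff e τ (g a) (g b)).symm

open Classical in
lemma fiber_card (e : Fin k ↪ Fin n) (g : Equiv.Perm (Fin k)) :
    (univ.filter fun τ : Equiv.Perm (Fin n) => pat e τ = g).card
      = (univ.filter fun τ : Equiv.Perm (Fin n) => pat e τ = 1).card := by
  symm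
  apply Finset.card_equiv (Equiv.mulRight (g.viaFintypeEmbedding e))
  intro τ
  simp only [mem_filter, mem_univ, true_and, Equiv.coe_mulRight]
  rw [pat_mul]
  constructor
  · intro h; rw [h, one_mul]
  · intro h
    have h2 : pat e τ * g = 1 * g := by rwa [one_mul]
    exact mul_right_cancel h2

open Classical in
lemma fiber_card_mul (e : Fin k ↪ Fin n) :
    (univ.filter fun τ : Equiv.Perm (Fin n) => pat e τ = 1).card * k ! = n ! := by
  have h1 : (univ : Finset (Equiv.Perm (Fin n))).card
      = ∑ g : Equiv.Perm (Fin k), (univ.filter fun τ => pat e τ = g).card :=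
    Finset.card_eq_sum_card_fiberwise (fun τ _ => mem_univ _)
  have h2 : ∀ g : Equiv.Perm (Fin k),
      (univ.filter fun τ : Equiv.Perm (Fin n) => pat e τ = g).card
        = (univ.filter fun τ : Equiv.Perm (Fin n) => pat e τ = 1).card := fiber_card e
  rw [Finset.sum_congr rfl (fun g _ => h2 g), Finset.sum_const, smul_eq_mul] at h1
  have hcards : (univ : Finset (Equiv.Perm (Fin n))).card = n ! := by
    simp [Finset.card_univ, Fintype.card_perm]
  have hcardk : (univ : Finset (Equiv.Perm (Fin k))).card = k ! := by
    simp [Finset.card_univ, Fintype.card_perm]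
  rw [hcards, hcardk] at h1
  rw [mul_comm]
  omega

end Pattern

open Classical in
lemma multi_fiber_card {M : ℕ} (e : Fin k ↪ Fin n) (ρ : Fin M → Equiv.Perm (Fin k)) :
    (univ.filter fun τ : Fin M → Equiv.Perm (Fin n) => (fun i => pat e (τ i)) = ρ).card
      = ((univ.filter fun τ : Equiv.Perm (Fin n) => pat e τ = 1).card) ^ M := by
  classical
  rw [← Fintype.card_subtype]
  have e1 : {τ : Fin M → Equiv.Perm (Fin n) // (fun i => pat e (τ i)) = ρ}
      ≃ {τ : Fin M → Equiv.Perm (Fin n) // ∀ i, pat e (τ i) = ρ i} :=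
    Equiv.subtypeEquivRight (fun τ => funext_iff)
  have e2 : {τ : Fin M → Equiv.Perm (Fin n) // ∀ i, pat e (τ i) = ρ i}
      ≃ ∀ i : Fin M, {x : Equiv.Perm (Fin n) // pat e x = ρ i} :=
    Equiv.subtypePiEquivPi (α := Fin M) (β := fun _ => Equiv.Perm (Fin n))
      (p := fun i x => pat e x = ρ i)
  rw [Fintype.card_congr (e1.trans e2), Fintype.card_pi]
  have : ∀ i : Fin M, Fintype.card {x : Equiv.Perm (Fin n) // pat e x = ρ i}
      = (univ.filter fun τ : Equiv.Perm (Fin n) => pat e τ = 1).card := by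
    intro i
    rw [Fintype.card_subtype]
    exact fiber_card e (ρ i)
  rw [Finset.prod_congr rfl (fun i _ => this i), Finset.prod_const, Finset.card_univ,
    Fintype.card_fin]



open Classical in
lemma acnt_eq (M n : ℕ) (j : Fin n) : Acnt M n = n * Ncnt M n j := by
  classical
  have h1 : Acnt M n = ∑ σ : Fin M → Equiv.Perm (Fin n), ∑ j' : Fin n,
      if Undom σ j' then 1 else 0 := by
    refine Finset.sum_congr rfl fun σ _ => ?_
    rw [cntU, Finset.card_filter]
  have hswap : ∀ j₁ j₂ : Fin n, Ncnt M n j₁ = Ncnt M n j₂ := by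
    intro j₁ j₂
    have key : ∀ (π : Equiv.Perm (Fin n)) (σ : Fin M → Equiv.Perm (Fin n)) (j₃ : Fin n),
        Undom (fun i => σ i * π) j₃ ↔ Undom σ (π j₃) := by
      intro π σ j₃
      constructor
      · intro h j₄ hj₄
        have hne : π⁻¹ j₄ ≠ j₃ := by
          intro hcontra
          apply hj₄
          rw [← hcontra]
          simp
        obtain ⟨i, hi⟩ := h _ hne
        refine ⟨i, ?_⟩
        simpa using hi
      · intro h j₄ hj₄
        have hne : π j₄ ≠ π j₃ := fun hc => hj₄ (π.injective hc)
        obtain ⟨i, hi⟩ := h _ hne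
        exact ⟨i, hi⟩
    rw [Ncnt, Ncnt]
    have hj : Equiv.swap j₁ j₂ j₂ = j₁ := Equiv.swap_apply_right j₁ j₂
    refine Finset.card_equiv
      (Equiv.piCongrRight fun _ => Equiv.mulRight (Equiv.swap j₁ j₂)) ?_
    intro σ
    simp only [mem_filter, mem_univ, true_and]
    have hpi : ((Equiv.piCongrRight fun _ : Fin M => Equiv.mulRight (Equiv.swap j₁ j₂)) σ)
        = fun i => σ i * Equiv.swap j₁ j₂ := rfl
    rw [hpi, key (Equiv.swap j₁ j₂) σ j₂, hj]
  have h2 : Acnt M n = ∑ j' : Fin n, Ncnt M n j' := by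
    rw [h1, Finset.sum_comm]
    refine Finset.sum_congr rfl fun j' _ => ?_
    rw [Ncnt, Finset.card_filter]
  rw [h2, Finset.sum_congr rfl (fun j' _ => hswap j' j), Finset.sum_const,
    Finset.card_univ, Fintype.card_fin, smul_eq_mul]

open Classical in
lemma key_count (M k n : ℕ) (K : Finset (Fin n)) (hK : K.card = k) (j₀ : Fin n)
    (hj : j₀ ∈ K) :
    (univ.filter fun τ : Fin M → Equiv.Perm (Fin n) =>
        ∀ j' ∈ K, j' ≠ j₀ → ∃ i, τ i j' < τ i j₀).card * (k ! ^ M * k)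
      = n ! ^ M * Acnt M k := by
  classical
  set e : Fin k ↪ Fin n := (K.orderEmbOfFin hK).toEmbedding with he
  have hmem : ∀ a, e a ∈ K := fun a => K.orderEmbOfFin_mem hK a
  have hsurj : ∀ j' ∈ K, ∃ a, e a = j' := by
    intro j' hj'
    have : j' ∈ Set.range (K.orderEmbOfFin hK) := by
      rw [K.range_orderEmbOfFin hK]; exact hj'
    obtain ⟨a, ha⟩ := this
    exact ⟨a, ha⟩
  obtain ⟨b₀, hb₀⟩ := hsurj j₀ hj
  -- step A : rewrite the filter condition via patterns
  have hiff : ∀ τ : Fin M → Equiv.Perm (Fin n),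
      (∀ j' ∈ K, j' ≠ j₀ → ∃ i, τ i j' < τ i j₀) ↔ Undom (fun i => pat e (τ i)) b₀ := by
    intro τ
    constructor
    · intro h a ha
      have hne : e a ≠ j₀ := by
        rw [← hb₀]; exact fun hc => ha (e.injective hc)
      obtain ⟨i, hi⟩ := h (e a) (hmem a) hne
      refine ⟨i, ?_⟩
      rw [pat_lt_iff, hb₀]
      exact hi
    · intro h j' hj' hne
      obtain ⟨a, ha⟩ := hsurj j' hj'
      have hab : a ≠ b₀ := by
        intro hc; apply hne; rw [← ha, hc, hb₀]
      obtain ⟨i, hi⟩ := h a hab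
      rw [pat_lt_iff, hb₀, ha] at hi
      exact ⟨i, hi⟩
  set c : ℕ := (univ.filter fun τ : Equiv.Perm (Fin n) => pat e τ = 1).card with hc
  -- step B : fiberwise count
  have hcount : (univ.filter fun τ : Fin M → Equiv.Perm (Fin n) =>
      ∀ j' ∈ K, j' ≠ j₀ → ∃ i, τ i j' < τ i j₀).card = c ^ M * Ncnt M k b₀ := by
    rw [Finset.filter_congr (fun τ _ => by rw [hiff τ])]
    rw [Finset.card_filter]
    rw [← Finset.sum_fiberwise (univ : Finset (Fin M → Equiv.Perm (Fin n)))
      (fun τ => (fun i => pat e (τ i)))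
      (fun τ => if Undom (fun i => pat e (τ i)) b₀ then 1 else 0)]
    have hinner : ∀ ρ : Fin M → Equiv.Perm (Fin k),
        (∑ τ ∈ univ.filter fun τ : Fin M → Equiv.Perm (Fin n) =>
            (fun i => pat e (τ i)) = ρ,
          if Undom (fun i => pat e (τ i)) b₀ then 1 else 0)
          = c ^ M * (if Undom ρ b₀ then 1 else 0) := by
      intro ρ
      have hbody : ∀ τ ∈ univ.filter
          (fun τ : Fin M → Equiv.Perm (Fin n) => (fun i => pat e (τ i)) = ρ),
          (if Undom (fun i => pat e (τ i)) b₀ then (1 : ℕ) else 0)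
            = if Undom ρ b₀ then (1 : ℕ) else 0 := by
        intro τ hτ
        rw [Finset.mem_filter] at hτ
        rw [hτ.2]
      rw [Finset.sum_congr rfl hbody, Finset.sum_const, smul_eq_mul, multi_fiber_card e ρ]
    rw [Finset.sum_congr rfl (fun ρ _ => hinner ρ), ← Finset.mul_sum]
    congr 1
    rw [Ncnt, Finset.card_filter]
  rw [hcount, acnt_eq M k b₀]
  have hck : c * k ! = n ! := fiber_card_mul e
  calc c ^ M * Ncnt M k b₀ * (k ! ^ M * k)
      = (c * k !) ^ M * (k * Ncnt M k b₀) := by ring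
    _ = n ! ^ M * (k * Ncnt M k b₀) := by rw [hck]


lemma undom_iff {m n : ℕ} (hm : 1 ≤ m) (ω : Omega m n) (j : Fin n) :
    (¬ ColDomIn (CPay ω) Finset.univ Finset.univ j) ↔ Undom ω.2 j := by
  constructor
  · intro h j' hne
    rw [ColDomIn] at h
    push_neg at h
    obtain ⟨i, -, hi⟩ := h j' (mem_univ _)
    simp only [CPay] at hi
    have hlen : ((ω.2 i) j' : ℕ) ≤ ((ω.2 i) j : ℕ) := by exact_mod_cast hi
    have hle : (ω.2 i) j' ≤ (ω.2 i) j := by rw [Fin.le_def]; exact hlen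
    have hne2 : (ω.2 i) j' ≠ (ω.2 i) j := fun hc => hne ((ω.2 i).injective hc)
    exact ⟨i, lt_of_le_of_ne hle hne2⟩
  · intro h hcol
    obtain ⟨j', -, hall⟩ := hcol
    by_cases hje : j' = j
    · subst hje
      exact lt_irrefl _ (hall ⟨0, hm⟩ (mem_univ _))
    · obtain ⟨i, hi⟩ := h j' hje
      have h2 := hall i (mem_univ _)
      simp only [CPay] at h2
      have h3n : ((ω.2 i) j : ℕ) < ((ω.2 i) j' : ℕ) := by exact_mod_cast h2
      have h3 : (ω.2 i) j < (ω.2 i) j' := by rw [Fin.lt_def]; exact h3n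
      exact absurd hi (not_lt.mpr (le_of_lt h3))

lemma expUC_eq (m n : ℕ) (hm : 1 ≤ m) :
    expUC m n = (Acnt m n : ℝ) / ((n ! : ℝ) ^ m) := by
  classical
  have hUC : ∀ ω : Omega m n, UC ω = cntU ω.2 := by
    intro ω
    rw [UC, cntU]
    congr 1
    apply Finset.filter_congr
    intro j _
    exact undom_iff hm ω j
  rw [expUC]
  have hsum : ∑ ω : Omega m n, (UC ω : ℝ)
      = (Fintype.card (Fin n → Equiv.Perm (Fin m)) : ℝ) * (Acnt m n : ℝ) := by
    rw [Fintype.sum_prod_type]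
    have : ∀ x : Fin n → Equiv.Perm (Fin m),
        ∑ y : Fin m → Equiv.Perm (Fin n), (UC ((x, y) : Omega m n) : ℝ)
          = (Acnt m n : ℝ) := by
      intro x
      rw [Acnt, Nat.cast_sum]
      exact Finset.sum_congr rfl fun y _ => by rw [hUC (x, y)]
    rw [Finset.sum_congr rfl fun x _ => this x, Finset.sum_const, Finset.card_univ,
      nsmul_eq_mul]
  rw [hsum]
  have hcard : (Fintype.card (Omega m n) : ℝ)
      = (Fintype.card (Fin n → Equiv.Perm (Fin m)) : ℝ) * ((n ! : ℝ) ^ m) := by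
    rw [Fintype.card_prod]
    push_cast
    congr 1
    rw [Fintype.card_fun, Fintype.card_perm, Fintype.card_fin, Fintype.card_fin]
    push_cast
    ring
  rw [hcard]
  have hne : (Fintype.card (Fin n → Equiv.Perm (Fin m)) : ℝ) ≠ 0 :=
    Nat.cast_ne_zero.mpr Fintype.card_ne_zero
  rw [mul_div_mul_left _ _ hne]

lemma cntU_ge_one {M n : ℕ} (hM : 1 ≤ M) (hn : 1 ≤ n) (σ : Fin M → Equiv.Perm (Fin n)) :
    1 ≤ cntU σ := by
  classical
  obtain ⟨j, -, hmax⟩ := Finset.exists_max_image (univ : Finset (Fin n))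
    (fun j => ∑ i, ((σ i) j : ℕ)) ⟨⟨0, hn⟩, mem_univ _⟩
  rw [cntU]
  refine Finset.card_pos.mpr ⟨j, Finset.mem_filter.mpr ⟨mem_univ _, ?_⟩⟩
  intro j' hne
  by_contra hno
  push_neg at hno
  have hstrict : ∀ i : Fin M, (σ i) j < (σ i) j' := by
    intro i
    have h1 : (σ i) j ≤ (σ i) j' := hno i
    have h2 : (σ i) j ≠ (σ i) j' := fun hc => hne ((σ i).injective hc.symm)
    exact lt_of_le_of_ne h1 h2
  have hsum : ∑ i, ((σ i) j : ℕ) < ∑ i, ((σ i) j' : ℕ) := by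
    refine Finset.sum_lt_sum_of_nonempty ⟨⟨0, hM⟩, mem_univ _⟩ fun i _ => ?_
    exact hstrict i
  exact absurd (hmax j' (mem_univ _)) (not_le.mpr hsum)

lemma expUC_ge_one {m n : ℕ} (hm : 1 ≤ m) (hn : 1 ≤ n) : 1 ≤ expUC m n := by
  classical
  rw [expUC_eq m n hm]
  have hpos : (0 : ℝ) < (n ! : ℝ) ^ m := by positivity
  rw [le_div_iff₀ hpos, one_mul]
  have h1 : (n ! : ℕ) ^ m ≤ Acnt m n := by
    have : ∑ σ : Fin m → Equiv.Perm (Fin n), 1 ≤ Acnt m n :=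
      Finset.sum_le_sum fun σ _ => cntU_ge_one hm hn σ
    rwa [Finset.sum_const, smul_eq_mul, mul_one, Finset.card_univ, Fintype.card_fun,
      Fintype.card_perm, Fintype.card_fin, Fintype.card_fin] at this
  exact_mod_cast h1

lemma expUC_one_row {n : ℕ} (hn : 1 ≤ n) : expUC 1 n = 1 := by
  classical
  rw [expUC_eq 1 n le_rfl]
  have hcnt : ∀ σ : Fin 1 → Equiv.Perm (Fin n), cntU σ = 1 := by
    intro σ
    refine le_antisymm ?_ (cntU_ge_one le_rfl hn σ)
    rw [cntU]
    refine Finset.card_le_one.mpr fun j hj j' hj' => ?_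
    rw [Finset.mem_filter] at hj hj'
    by_contra hne
    obtain ⟨i, hi⟩ := hj.2 j' (Ne.symm hne)
    obtain ⟨i', hi'⟩ := hj'.2 j hne
    have : i = i' := Subsingleton.elim i i'
    rw [this] at hi
    exact absurd hi (not_lt.mpr (le_of_lt hi'))
  have : Acnt 1 n = n ! := by
    rw [Acnt, Finset.sum_congr rfl fun σ _ => hcnt σ, Finset.sum_const, smul_eq_mul,
      mul_one, Finset.card_univ, Fintype.card_fun, Fintype.card_perm, Fintype.card_fin,
      Fintype.card_fin, pow_one]
  rw [this, pow_one, div_self (Nat.cast_ne_zero.mpr (Nat.factorial_ne_zero n))]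

lemma cons_undom_iff {M n : ℕ} (σ₀ : Equiv.Perm (Fin n)) (τ : Fin M → Equiv.Perm (Fin n))
    (j₀ : Fin n) :
    Undom (Fin.cons σ₀ τ) j₀ ↔
      ∀ j' ∈ univ.filter (fun j' => σ₀ j₀ ≤ σ₀ j'), j' ≠ j₀ → ∃ i, τ i j' < τ i j₀ := by
  constructor
  · intro h j' hj' hne
    rw [Finset.mem_filter] at hj'
    obtain ⟨i, hi⟩ := h j' hne
    rcases Fin.eq_zero_or_eq_succ i with rfl | ⟨i', rfl⟩
    · rw [Fin.cons_zero] at hi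
      exact absurd hi (not_lt.mpr hj'.2)
    · rw [Fin.cons_succ] at hi
      exact ⟨i', hi⟩
  · intro h j' hne
    rcases lt_or_ge (σ₀ j') (σ₀ j₀) with hlt | hle
    · exact ⟨0, by rwa [Fin.cons_zero]⟩
    · obtain ⟨i, hi⟩ := h j' (Finset.mem_filter.mpr ⟨mem_univ _, hle⟩) hne
      exact ⟨i.succ, by rwa [Fin.cons_succ]⟩

lemma card_K {n : ℕ} (σ₀ : Equiv.Perm (Fin n)) (j₀ : Fin n) :
    (univ.filter fun j' => σ₀ j₀ ≤ σ₀ j').card = n - (σ₀ j₀ : ℕ) := by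
  classical
  have himg : (univ.filter fun j' => σ₀ j₀ ≤ σ₀ j').image σ₀ = Finset.Ici (σ₀ j₀) := by
    ext v
    simp only [Finset.mem_image, Finset.mem_filter, mem_univ, true_and, Finset.mem_Ici]
    constructor
    · rintro ⟨j', hj', rfl⟩; exact hj'
    · intro hv; exact ⟨σ₀.symm v, by simpa using hv, by simp⟩
  rw [← Fin.card_Ici (σ₀ j₀), ← himg, Finset.card_image_of_injective _ σ₀.injective]

open Classical in
lemma perm_fiber {n : ℕ} (j₀ v : Fin n) :
    (univ.filter fun σ : Equiv.Perm (Fin n) => σ j₀ = v).card * n = n ! := by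
  classical
  have hall : ∀ v' : Fin n, (univ.filter fun σ : Equiv.Perm (Fin n) => σ j₀ = v').card
      = (univ.filter fun σ : Equiv.Perm (Fin n) => σ j₀ = v).card := by
    intro v'
    apply Finset.card_equiv (Equiv.mulLeft (Equiv.swap v' v))
    intro σ
    simp only [Finset.mem_filter, mem_univ, true_and, Equiv.coe_mulLeft,
      Equiv.Perm.mul_apply]
    constructor
    · intro h; rw [h]; exact Equiv.swap_apply_left v' v
    · intro h
      have h2 := congrArg (Equiv.swap v' v) h
      rwa [Equiv.swap_apply_self, Equiv.swap_apply_right] at h2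
  have h1 : (univ : Finset (Equiv.Perm (Fin n))).card
      = ∑ v' : Fin n, (univ.filter fun σ : Equiv.Perm (Fin n) => σ j₀ = v').card :=
    Finset.card_eq_sum_card_fiberwise (fun σ _ => mem_univ _)
  have h2 : (univ : Finset (Equiv.Perm (Fin n))).card
      = n * (univ.filter fun σ : Equiv.Perm (Fin n) => σ j₀ = v).card := by
    rw [h1, Finset.sum_congr rfl (fun v' _ => hall v'), Finset.sum_const, smul_eq_mul]
    congr 1
    rw [Finset.card_univ, Fintype.card_fin]
  have h3 : (univ : Finset (Equiv.Perm (Fin n))).card = n ! := by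
    rw [Finset.card_univ, Fintype.card_perm, Fintype.card_fin]
  rw [mul_comm, ← h2]
  exact h3

lemma recur (M n : ℕ) (hM : 1 ≤ M) (hn : 1 ≤ n) :
    expUC (M + 1) n = ∑ k ∈ Finset.Icc 1 n, expUC M k / (k : ℝ) := by
  classical
  have hnn : (n : ℝ) ≠ 0 := Nat.cast_ne_zero.mpr (by omega)
  have hnf : ((n  ! : ℝ)) ≠ 0 := by exact_mod_cast Nat.factorial_ne_zero n
  obtain ⟨j₀⟩ : Nonempty (Fin n) := ⟨⟨0, hn⟩⟩
  -- Step 1 : decompose over the first row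
  have hstep1 : Ncnt (M + 1) n j₀ = ∑ σ₀ : Equiv.Perm (Fin n),
      (univ.filter fun τ : Fin M → Equiv.Perm (Fin n) =>
        ∀ j' ∈ univ.filter (fun j' => σ₀ j₀ ≤ σ₀ j'), j' ≠ j₀ → ∃ i, τ i j' < τ i j₀).card := by
    rw [Ncnt, Finset.card_filter]
    rw [← Equiv.sum_comp (Fin.consEquiv (fun _ : Fin (M + 1) => Equiv.Perm (Fin n)))
      (fun σ => if Undom σ j₀ then (1 : ℕ) else 0)]
    rw [Fintype.sum_prod_type]
    refine Finset.sum_congr rfl fun σ₀ _ => ?_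
    rw [Finset.card_filter]
    refine Finset.sum_congr rfl fun τ _ => ?_
    have hcons : (Fin.consEquiv (fun _ : Fin (M + 1) => Equiv.Perm (Fin n))) (σ₀, τ)
        = Fin.cons σ₀ τ := rfl
    rw [hcons]
    exact if_congr (cons_undom_iff σ₀ τ j₀) rfl rfl
  -- Step 2 : count for a fixed first row
  have hT : ∀ σ₀ : Equiv.Perm (Fin n),
      ((univ.filter fun τ : Fin M → Equiv.Perm (Fin n) =>
        ∀ j' ∈ univ.filter (fun j' => σ₀ j₀ ≤ σ₀ j'), j' ≠ j₀ → ∃ i, τ i j' < τ i j₀).card : ℝ)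
      = ((n  ! : ℝ)) ^ M * (Acnt M (n - ((σ₀ j₀ : ℕ))) : ℝ)
          / ((((n - ((σ₀ j₀ : ℕ))) ! : ℝ)) ^ M * ((n - ((σ₀ j₀ : ℕ)) : ℕ) : ℝ)) := by
    intro σ₀
    have hkpos : 1 ≤ n - ((σ₀ j₀ : ℕ)) := by
      have h := (σ₀ j₀).isLt
      clear * - h
      omega
    have hkey := key_count M (n - ((σ₀ j₀ : ℕ))) n
      (univ.filter fun j' => σ₀ j₀ ≤ σ₀ j') (card_K σ₀ j₀) j₀
      (Finset.mem_filter.mpr ⟨mem_univ _, le_refl _⟩)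
    have hpos : (0 : ℝ) < (((n - ((σ₀ j₀ : ℕ))) ! : ℝ)) ^ M * ((n - ((σ₀ j₀ : ℕ)) : ℕ) : ℝ) := by
      have h1 : (0 : ℝ) < (((n - ((σ₀ j₀ : ℕ))) ! : ℝ)) := by
        exact_mod_cast (Nat.factorial_pos _)
      have h2 : (0 : ℝ) < ((n - ((σ₀ j₀ : ℕ)) : ℕ) : ℝ) := by exact_mod_cast hkpos
      positivity
    rw [eq_div_iff (ne_of_gt hpos)]
    exact_mod_cast hkey
  -- Step 3 : fiberwise sum over the value σ₀ j₀
  have hfib : ∀ f : Fin n → ℝ, ∑ σ₀ : Equiv.Perm (Fin n), f (σ₀ j₀)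
      = ∑ v : Fin n, ((n  ! : ℝ) / (n : ℝ)) * f v := by
    intro f
    rw [← Finset.sum_fiberwise (univ : Finset (Equiv.Perm (Fin n))) (fun σ₀ => σ₀ j₀)
      (fun σ₀ => f (σ₀ j₀))]
    refine Finset.sum_congr rfl fun v _ => ?_
    have hbody : ∀ σ₀ ∈ univ.filter (fun σ₀ : Equiv.Perm (Fin n) => σ₀ j₀ = v),
        f (σ₀ j₀) = f v := by
      intro σ₀ hσ₀
      rw [Finset.mem_filter] at hσ₀
      rw [hσ₀.2]
    rw [Finset.sum_congr rfl hbody, Finset.sum_const, nsmul_eq_mul]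
    congr 1
    have hpf := perm_fiber j₀ v
    have hpfr : ((univ.filter fun σ : Equiv.Perm (Fin n) => σ j₀ = v).card : ℝ) * (n : ℝ)
        = ((n  ! : ℝ)) := by exact_mod_cast hpf
    rw [eq_div_iff hnn]
    exact hpfr
  -- assemble
  rw [expUC_eq (M + 1) n (Nat.le_add_left 1 M), acnt_eq (M + 1) n j₀]
  have hNc : ((n : ℕ) * Ncnt (M + 1) n j₀ : ℝ) = (n : ℝ) *
      ∑ σ₀ : Equiv.Perm (Fin n),
      ((univ.filter fun τ : Fin M → Equiv.Perm (Fin n) =>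
        ∀ j' ∈ univ.filter (fun j' => σ₀ j₀ ≤ σ₀ j'), j' ≠ j₀ → ∃ i, τ i j' < τ i j₀).card : ℝ) := by
    rw [hstep1]
    push_cast
    ring
  push_cast
  rw [hNc]
  rw [Finset.sum_congr rfl fun σ₀ (h : σ₀ ∈ univ) => hT σ₀]
  rw [hfib (fun v => ((n  ! : ℝ)) ^ M * (Acnt M (n - ((v : ℕ))) : ℝ)
      / ((((n - ((v : ℕ))) ! : ℝ)) ^ M * ((n - ((v : ℕ)) : ℕ) : ℝ)))]
  -- reindex v ↦ n - v
  have hreindex : ∑ v : Fin n, ((n  ! : ℝ) / (n : ℝ)) *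
      (((n  ! : ℝ)) ^ M * (Acnt M (n - ((v : ℕ))) : ℝ)
        / ((((n - ((v : ℕ))) ! : ℝ)) ^ M * ((n - ((v : ℕ)) : ℕ) : ℝ)))
      = ∑ k ∈ Finset.Icc 1 n, ((n  ! : ℝ) / (n : ℝ)) *
      (((n  ! : ℝ)) ^ M * (Acnt M k : ℝ) / (((k  ! : ℝ)) ^ M * (k : ℝ))) := by
    rw [Fin.sum_univ_eq_sum_range (fun v => ((n  ! : ℝ) / (n : ℝ)) *
      (((n  ! : ℝ)) ^ M * (Acnt M (n - v) : ℝ)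
        / ((((n - v) ! : ℝ)) ^ M * ((n - v : ℕ) : ℝ)))) n]
    refine Finset.sum_nbij' (fun v => n - v) (fun k => n - k) ?_ ?_ ?_ ?_ ?_
    · intro a ha
      rw [Finset.mem_range] at ha
      rw [Finset.mem_Icc]
      clear * - ha hn
      omega
    · intro a ha
      rw [Finset.mem_Icc] at ha
      rw [Finset.mem_range]
      clear * - ha hn
      omega
    · intro a ha
      rw [Finset.mem_range] at ha
      clear * - ha hn
      omega
    · intro a ha
      rw [Finset.mem_Icc] at ha
      clear * - ha hn
      omega
    · intro a ha
      rfl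
  rw [hreindex]
  rw [Finset.mul_sum, Finset.sum_div]
  refine Finset.sum_congr rfl fun k hk => ?_
  rw [Finset.mem_Icc] at hk
  rw [expUC_eq M k hM]
  have hkk : (k : ℝ) ≠ 0 := Nat.cast_ne_zero.mpr (by clear * - hk; omega)
  have hkf : ((k  ! : ℝ)) ≠ 0 := by exact_mod_cast Nat.factorial_ne_zero k
  field_simp
  ring

lemma mono_m : ∀ m, 1 ≤ m →
    (∀ n, 1 ≤ n → expUC m n ≤ expUC (m + 1) n) ∧
    (∀ n, 2 ≤ n → expUC m n < expUC (m + 1) n) := by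
  intro m hm
  induction m, hm using Nat.le_induction with
  | base =>
    have hsum : ∀ n, 1 ≤ n → expUC 2 n = ∑ k ∈ Finset.Icc 1 n, (1 : ℝ) / k := by
      intro n hn
      rw [show (2 : ℕ) = 1 + 1 from rfl, recur 1 n le_rfl hn]
      refine Finset.sum_congr rfl fun k hk => ?_
      rw [Finset.mem_Icc] at hk
      rw [expUC_one_row hk.1]
    constructor
    · intro n hn
      rw [expUC_one_row hn, hsum n hn]
      have h2 : (1 : ℝ) / ((1 : ℕ) : ℝ) ≤ ∑ k ∈ Finset.Icc 1 n, (1 : ℝ) / k :=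
        Finset.single_le_sum (f := fun k : ℕ => (1 : ℝ) / k)
          (fun k _ => by positivity) (by rw [Finset.mem_Icc]; omega)
      simpa using h2
    · intro n hn
      rw [expUC_one_row (by omega), hsum n (by omega)]
      have h2 : (1 : ℝ) / ((1 : ℕ) : ℝ) < ∑ k ∈ Finset.Icc 1 n, (1 : ℝ) / k :=
        Finset.single_lt_sum (f := fun k : ℕ => (1 : ℝ) / k) (i := (1 : ℕ)) (j := (2 : ℕ))
          (by omega) (by rw [Finset.mem_Icc]; omega) (by rw [Finset.mem_Icc]; omega)
          (by positivity) (fun k _ _ => by positivity)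
      simpa using h2
  | succ m hm ih =>
    constructor
    · intro n hn
      rw [recur m n hm hn, recur (m + 1) n (by omega) hn]
      refine Finset.sum_le_sum fun k hk => ?_
      rw [Finset.mem_Icc] at hk
      have hkpos : (0 : ℝ) < (k : ℝ) := Nat.cast_pos.mpr (by omega)
      exact (div_le_div_iff_of_pos_right hkpos).mpr (ih.1 k hk.1)
    · intro n hn
      rw [recur m n hm (by omega), recur (m + 1) n (by omega) (by omega)]
      refine Finset.sum_lt_sum ?_ ⟨2, ?_, ?_⟩
      · intro k hk
        rw [Finset.mem_Icc] at hk
        have hkpos : (0 : ℝ) < (k : ℝ) := Nat.cast_pos.mpr (by omega)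
        exact (div_le_div_iff_of_pos_right hkpos).mpr (ih.1 k hk.1)
      · rw [Finset.mem_Icc]; omega
      · have hkpos : (0 : ℝ) < ((2 : ℕ) : ℝ) := by norm_num
        exact (div_lt_div_iff_of_pos_right hkpos).mpr (ih.2 2 le_rfl)

lemma mono_n (m n : ℕ) (hm : 2 ≤ m) (hn : 1 ≤ n) : expUC m n < expUC m (n + 1) := by
  obtain ⟨m', rfl⟩ : ∃ m', m = m' + 1 := ⟨m - 1, by omega⟩
  have hm' : 1 ≤ m' := by omega
  rw [recur m' n hm' hn, recur m' (n + 1) hm' (by omega)]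
  rw [Finset.sum_Icc_succ_top (by omega : 1 ≤ n + 1)]
  have hpos : 0 < expUC m' (n + 1) / ((n + 1 : ℕ) : ℝ) := by
    have h1 : (1 : ℝ) ≤ expUC m' (n + 1) := expUC_ge_one hm' (by omega)
    have h2 : (0 : ℝ) < ((n + 1 : ℕ) : ℝ) := by exact_mod_cast Nat.succ_pos n
    positivity
  linarith


end AuxUC

end Auxiliary

/-- For all `m, n ≥ 2`, `E[U^C(m,n)] = Σ_(k=1)^n E[U^C(m−1,k)]/k`, and
`E[U^C(m,n)]` is strictly increasing in each of `m` and `n`. -/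
theorem stmt11 (m n : ℕ) (hm : 2 ≤ m) (hn : 2 ≤ n) :
    expUC m n = ∑ k ∈ Finset.Icc 1 n, expUC (m - 1) k / (k : ℝ) ∧
    expUC m n < expUC (m + 1) n ∧
    expUC m n < expUC m (n + 1) := by
  obtain ⟨M, rfl⟩ : ∃ M, m = M + 1 := ⟨m - 1, by omega⟩
  have hM : 1 ≤ M := by omega
  refine ⟨?_, ?_, ?_⟩
  · have h1 : M + 1 - 1 = M := by omega
    rw [h1]
    exact AuxUC.recur M n hM (by omega)
  · exact (AuxUC.mono_m (M + 1) (by omega)).2 n hn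
  · exact AuxUC.mono_n (M + 1) (n) (by omega) (by omega)
end

section
/- For all m ≥ 2 and n ≥ 1, the expected number of Column's strictly undominated actions satisfies (ln n)^{m−1}/(m−1)! ≤ E[U^C(m,n)] ≤ Σ_{k=0}^{m−1} (ln n)^k/k!. -/
/-!
Only Column's payoffs matter: column `j` is undominated iff no `j'` beats it in every row.
Inclusion–exclusion over the set `S` of would-be dominators, independence of the rows, and the
fact that a uniform permutation ranks `j` below all of `S` with probability `1/(|S|+1)` give
`E[U^C(m,n)] = A(m-1,n)` with `A(s,n) = Σ_{k=1}^n (-1)^(k+1) C(n,k) / k^s`.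
Pascal's rule and absorption give `A(0,n) = 1` and `A(s+1,n+1) = A(s+1,n) + A(s,n+1)/(n+1)`, i.e.
`A(s+1,n) = Σ_{t≤n} A(s,t)/t`. Along it, `A(s,n) ≥ H_n^s/s! ≥ (ln n)^s/s!` follows from
`H_t^(s+1) - H_(t-1)^(s+1) ≤ (s+1) H_t^s / t`. For the upper bound, `T_s(x) = Σ_{k≤s} x^k/k!`
satisfies `T_{s+1}(a) + (1 - e^(a-b)) T_s(b) ≤ T_{s+1}(b)` for `0 ≤ a ≤ b`, since
`e^(-x) (b^(s+1)/(s+1)! - T_{s+1}(x))` decreases on `[0, b]`; at `a = ln n`, `b = ln (n+1)` the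
factor `1 - e^(a-b)` is `1/(n+1)`, matching the recursion.
-/

open Finset Filter

open Equiv Real
open scoped Nat

namespace Equiv.Perm

variable {α : Type*} [Fintype α] [LinearOrder α]

theorem card_filter_forall_le_apply_eq {A : Finset α} {a b : α}
    (ha : a ∈ A) (hb : b ∈ A) :
    #{σ : Perm α | ∀ x ∈ A, σ a ≤ σ x} = #{σ : Perm α | ∀ x ∈ A, σ b ≤ σ x} := by
  have hswap : ∀ x ∈ A, swap a b x ∈ A := fun x hx => by
    rcases eq_or_ne x a with rfl | hxa
    · simpa
    rcases eq_or_ne x b with rfl | hxb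
    · simpa
    rwa [swap_apply_of_ne_of_ne hxa hxb]
  refine card_equiv (Equiv.mulRight (swap a b)) fun σ => ?_
  simp only [mem_filter, mem_univ, true_and, Equiv.coe_mulRight, Perm.mul_apply,
    swap_apply_right]
  exact ⟨fun h x hx => h _ (hswap x hx),
    fun h x hx => by simpa using h (swap a b x) (hswap x hx)⟩

theorem sum_card_filter_forall_le_apply {A : Finset α} (hA : A.Nonempty) :
    ∑ a ∈ A, #{σ : Perm α | ∀ x ∈ A, σ a ≤ σ x} = (Fintype.card α)! := by
  have hargmin : ∀ σ : Perm α, #{a ∈ A | ∀ x ∈ A, σ a ≤ σ x} = 1 := fun σ => by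
    obtain ⟨a, ha, hmin⟩ := A.exists_min_image σ hA
    refine card_eq_one.mpr ⟨a, Finset.ext fun b => ?_⟩
    simp only [mem_filter, mem_singleton]
    exact ⟨fun ⟨hb, h⟩ => σ.injective (le_antisymm (h a ha) (hmin b hb)),
      fun hba => hba ▸ ⟨ha, hmin⟩⟩
  simp only [card_filter]
  rw [sum_comm, ← Fintype.card_perm, Fintype.card_eq_sum_ones]
  exact sum_congr rfl fun σ _ => by rw [← card_filter, hargmin]

theorem card_mul_card_filter_forall_lt_apply {S : Finset α} {j : α} (hj : j ∉ S) :
    (#S + 1) * #{σ : Perm α | ∀ x ∈ S, σ j < σ x} = (Fintype.card α)! := by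
  have hle : #{σ : Perm α | ∀ x ∈ S, σ j < σ x} =
      #{σ : Perm α | ∀ x ∈ insert j S, σ j ≤ σ x} := by
    congr 1
    ext σ
    simp only [mem_filter, mem_univ, true_and, forall_mem_insert, le_refl]
    exact forall₂_congr fun x hx =>
      (σ.injective.ne (ne_of_mem_of_not_mem hx hj)).symm.le_iff_lt.symm
  rw [hle, ← card_insert_of_notMem hj, ← smul_eq_mul, ← sum_const,
    ← sum_card_filter_forall_le_apply (insert_nonempty j S)]
  exact sum_congr rfl fun a ha => card_filter_forall_le_apply_eq (mem_insert_self j S) ha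

end Equiv.Perm

theorem Finset.sum_powerset_ite_subset_neg_one_pow {β R : Type*} [DecidableEq β] [Ring R]
    {D E : Finset β} (h : D ⊆ E) :
    ∑ S ∈ E.powerset, (if S ⊆ D then (-1 : R) ^ #S else 0) = if D = ∅ then 1 else 0 := by
  have hD : {S ∈ E.powerset | S ⊆ D} = D.powerset := by
    ext S
    simp only [mem_filter, mem_powerset]
    exact ⟨And.right, fun hS => ⟨hS.trans h, hS⟩⟩
  rw [← sum_filter, hD]
  have h := congrArg (Int.cast : ℤ → R) (sum_powerset_neg_one_pow_card (x := D))
  push_cast at h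
  exact h

section Dominators

variable {ι α : Type*} [Fintype ι] [DecidableEq ι] [Fintype α] [LinearOrder α]

def dominators (τ : ι → Perm α) (j : α) : Finset α := {x | ∀ i, τ i j < τ i x}

theorem card_filter_subset_dominators (S : Finset α) (j : α) :
    #{τ : ι → Perm α | S ⊆ dominators τ j} =
      #{σ : Perm α | ∀ x ∈ S, σ j < σ x} ^ Fintype.card ι := by
  have hpi : ({τ : ι → Perm α | S ⊆ dominators τ j} : Finset (ι → Perm α)) =
      Fintype.piFinset fun _ => {σ : Perm α | ∀ x ∈ S, σ j < σ x} := by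
    ext τ
    simp only [mem_filter, mem_univ, true_and, Fintype.mem_piFinset, subset_iff, dominators]
    exact ⟨fun h i x hx => h hx i, fun h x hx i => h i x hx⟩
  rw [hpi, Fintype.card_piFinset, prod_const, card_univ]

theorem card_filter_dominators_eq_empty [Nonempty ι] (j : α) :
    (#{τ : ι → Perm α | dominators τ j = ∅} : ℝ) =
      ∑ S ∈ (univ.erase j).powerset,
        (-1) ^ #S * (#{σ : Perm α | ∀ x ∈ S, σ j < σ x} : ℝ) ^ Fintype.card ι := by
  have hsub : ∀ τ : ι → Perm α, dominators τ j ⊆ univ.erase j := fun τ x hx => by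
    refine mem_erase.mpr ⟨fun hxj => ?_, mem_univ x⟩
    obtain ⟨i⟩ := ‹Nonempty ι›
    simp only [dominators, mem_filter, mem_univ, true_and] at hx
    exact (hx i).ne (by rw [hxj])
  calc (#{τ : ι → Perm α | dominators τ j = ∅} : ℝ)
      = ∑ τ : ι → Perm α, if dominators τ j = ∅ then 1 else 0 := by rw [sum_boole]
    _ = ∑ τ : ι → Perm α, ∑ S ∈ (univ.erase j).powerset,
          if S ⊆ dominators τ j then (-1) ^ #S else 0 := by
        simp only [sum_powerset_ite_subset_neg_one_pow (hsub _)]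
    _ = ∑ S ∈ (univ.erase j).powerset,
          (-1) ^ #S * (#{τ : ι → Perm α | S ⊆ dominators τ j} : ℝ) := by
        rw [sum_comm]
        refine sum_congr rfl fun S _ => ?_
        rw [← sum_filter, sum_const, nsmul_eq_mul, mul_comm]
    _ = _ := by simp only [card_filter_subset_dominators, Nat.cast_pow]

theorem card_filter_dominators_eq_empty_div [Nonempty ι] (j : α) :
    (#{τ : ι → Perm α | dominators τ j = ∅} : ℝ) / Fintype.card (ι → Perm α) =
      ∑ k ∈ range (Fintype.card α),
        ((Fintype.card α - 1).choose k : ℝ) * ((-1) ^ k / (k + 1) ^ Fintype.card ι) := by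
  have hterm : ∀ S ∈ (univ.erase j).powerset,
      (-1) ^ #S * (#{σ : Perm α | ∀ x ∈ S, σ j < σ x} : ℝ) ^ Fintype.card ι /
        ((Fintype.card α)! : ℝ) ^ Fintype.card ι =
      (-1) ^ #S / (#S + 1 : ℝ) ^ Fintype.card ι := fun S hS => by
    have hj : j ∉ S := fun h => by simpa using mem_powerset.mp hS h
    have hcount :
        ((Fintype.card α)! : ℝ) = (#S + 1) * #{σ : Perm α | ∀ x ∈ S, σ j < σ x} := by
      exact_mod_cast (Perm.card_mul_card_filter_forall_lt_apply hj).symm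
    have hne : (#{σ : Perm α | ∀ x ∈ S, σ j < σ x} : ℝ) ≠ 0 := fun h0 => by
      simp [h0, Nat.factorial_ne_zero] at hcount
    rw [hcount, mul_pow]
    field_simp
  rw [card_filter_dominators_eq_empty, Fintype.card_fun, Fintype.card_perm, Nat.cast_pow,
    sum_div, sum_congr rfl hterm,
    sum_powerset_apply_card (fun k => (-1 : ℝ) ^ k / (k + 1 : ℝ) ^ Fintype.card ι),
    card_erase_of_mem (mem_univ j), card_univ,
    Nat.sub_add_cancel (Fintype.card_pos_iff.mpr ⟨j⟩)]
  simp only [nsmul_eq_mul]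

end Dominators

noncomputable def altBinomSum (s n : ℕ) : ℝ :=
  ∑ k ∈ range n, (-1) ^ k * (n.choose (k + 1) : ℝ) / ((k : ℝ) + 1) ^ s

@[simp]
theorem altBinomSum_zero_right (s : ℕ) : altBinomSum s 0 = 0 := by
  simp [altBinomSum]

@[simp]
theorem altBinomSum_one_right (s : ℕ) : altBinomSum s 1 = 1 := by
  simp [altBinomSum]

theorem altBinomSum_zero_left {n : ℕ} (hn : n ≠ 0) : altBinomSum 0 n = 1 := by
  have h := Int.alternating_sum_range_choose_of_ne hn
  rw [sum_range_succ'] at h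
  have hZ : ∑ k ∈ range n, (-1 : ℤ) ^ k * n.choose (k + 1) = 1 := by
    simp only [pow_succ, mul_neg_one, neg_mul, sum_neg_distrib, pow_zero,
      Nat.choose_zero_right, Nat.cast_one, mul_one] at h
    linarith
  simp only [altBinomSum, pow_zero, div_one]
  exact_mod_cast hZ

theorem altBinomSum_succ_succ (s n : ℕ) :
    altBinomSum (s + 1) (n + 1) = altBinomSum (s + 1) n + altBinomSum s (n + 1) / (n + 1) := by
  have hext : altBinomSum (s + 1) n =
      ∑ k ∈ range (n + 1), (-1) ^ k * (n.choose (k + 1) : ℝ) / ((k : ℝ) + 1) ^ (s + 1) := by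
    simp [altBinomSum, sum_range_succ]
  rw [hext, altBinomSum, altBinomSum, sum_div, ← sum_add_distrib]
  refine sum_congr rfl fun k _ => ?_
  have hpascal : ((n + 1).choose (k + 1) : ℝ) = n.choose k + n.choose (k + 1) := by
    exact_mod_cast Nat.choose_succ_succ n k
  have habsorb : ((n : ℝ) + 1) * n.choose k = ((k : ℝ) + 1) * (n + 1).choose (k + 1) := by
    exact_mod_cast (Nat.add_one_mul_choose_eq n k).trans (Nat.mul_comm _ _)
  field_simp
  linear_combination ((k : ℝ) + 1) ^ s * (habsorb + ((n : ℝ) + 1) * hpascal)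

theorem altBinomSum_succ_left (s n : ℕ) :
    altBinomSum (s + 1) n = ∑ t ∈ range n, altBinomSum s (t + 1) / (t + 1) := by
  induction n with
  | zero => simp
  | succ n ih => rw [altBinomSum_succ_succ, ih, sum_range_succ]

theorem altBinomSum_eq_mul_sum_choose (s n : ℕ) :
    altBinomSum s n =
      n * ∑ k ∈ range n, ((n - 1).choose k : ℝ) * ((-1) ^ k / ((k : ℝ) + 1) ^ (s + 1)) := by
  rcases n with _ | n
  · simp
  rw [altBinomSum, mul_sum]
  refine sum_congr rfl fun k _ => ?_
  have habsorb : ((n : ℝ) + 1) * n.choose k = (n + 1).choose (k + 1) * ((k : ℝ) + 1) := by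
    exact_mod_cast Nat.add_one_mul_choose_eq n k
  rw [Nat.add_sub_cancel, Nat.cast_add_one, ← mul_assoc, habsorb]
  field_simp
  ring

theorem UC_eq_card_filter_dominators_eq_empty {m n : ℕ} (ω : Omega m n) :
    UC ω = #{j | dominators ω.2 j = ∅} := by
  rw [UC]
  congr 1
  ext j
  simp [ColDomIn, CPay, dominators, filter_eq_empty_iff]

theorem expUC_eq_sum_card_filter_dominators_eq_empty (m n : ℕ) :
    expUC m n = ∑ j : Fin n, (#{τ : Fin m → Perm (Fin n) | dominators τ j = ∅} : ℝ) /
      Fintype.card (Fin m → Perm (Fin n)) := by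
  have hcount : ∑ τ : Fin m → Perm (Fin n), #{j | dominators τ j = ∅} =
      ∑ j : Fin n, #{τ : Fin m → Perm (Fin n) | dominators τ j = ∅} := by
    simp only [card_filter]
    exact sum_comm
  rw [expUC, Fintype.sum_prod_type]
  simp only [UC_eq_card_filter_dominators_eq_empty]
  rw [sum_const, card_univ, Fintype.card_prod, ← sum_div, nsmul_eq_mul, Nat.cast_mul,
    mul_div_mul_left _ _ (by positivity), ← Nat.cast_sum, hcount, Nat.cast_sum]

theorem expUC_succ (s n : ℕ) : expUC (s + 1) n = altBinomSum s n := by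
  rw [expUC_eq_sum_card_filter_dominators_eq_empty, altBinomSum_eq_mul_sum_choose]
  simp only [card_filter_dominators_eq_empty_div, Fintype.card_fin, sum_const, card_univ,
    nsmul_eq_mul]

theorem harmonic_succ_pow_sub_pow_le (s t : ℕ) :
    (harmonic (t + 1) : ℝ) ^ (s + 1) - (harmonic t : ℝ) ^ (s + 1) ≤
      (s + 1) * (harmonic (t + 1) : ℝ) ^ s / (t + 1) := by
  have hstep : (harmonic (t + 1) : ℝ) - harmonic t = 1 / (t + 1) := by
    rw [harmonic_succ]
    push_cast
    ring
  have h0 : (0 : ℝ) ≤ harmonic t := by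
    rw [harmonic]
    positivity
  have hle : (harmonic t : ℝ) ≤ harmonic (t + 1) := by
    linarith [show (0 : ℝ) < 1 / (t + 1) by positivity]
  have h := (le_abs_self _).trans
    (abs_pow_sub_pow_le (harmonic (t + 1) : ℝ) (harmonic t) (s + 1))
  rw [abs_of_nonneg (sub_nonneg.mpr hle), abs_of_nonneg h0, abs_of_nonneg (h0.trans hle),
    max_eq_left hle, hstep, Nat.add_sub_cancel] at h
  calc _ ≤ _ := h
    _ = _ := by push_cast; ring

theorem harmonic_pow_div_factorial_le_altBinomSum (s : ℕ) {n : ℕ} (hn : n ≠ 0) :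
    (harmonic n : ℝ) ^ s / s ! ≤ altBinomSum s n := by
  induction s generalizing n with
  | zero => simp [altBinomSum_zero_left hn]
  | succ s ih =>
    have htelescope : (harmonic n : ℝ) ^ (s + 1) =
        ∑ t ∈ range n, ((harmonic (t + 1) : ℝ) ^ (s + 1) - (harmonic t : ℝ) ^ (s + 1)) := by
      rw [sum_range_sub (fun t => (harmonic t : ℝ) ^ (s + 1))]
      simp
    rw [altBinomSum_succ_left, htelescope, sum_div]
    refine sum_le_sum fun t _ => ?_
    calc ((harmonic (t + 1) : ℝ) ^ (s + 1) - (harmonic t : ℝ) ^ (s + 1)) / (s + 1)!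
        ≤ (s + 1) * (harmonic (t + 1) : ℝ) ^ s / (t + 1) / (s + 1)! := by
          gcongr
          exact harmonic_succ_pow_sub_pow_le s t
      _ = (harmonic (t + 1) : ℝ) ^ s / s ! / (t + 1) := by
          rw [Nat.factorial_succ]
          push_cast
          field_simp
      _ ≤ altBinomSum s (t + 1) / (t + 1) := by
          gcongr
          exact ih t.succ_ne_zero

noncomputable def expTaylor (s : ℕ) (x : ℝ) : ℝ := ∑ k ∈ range (s + 1), x ^ k / k !

theorem expTaylor_succ (s : ℕ) (x : ℝ) :
    expTaylor (s + 1) x = expTaylor s x + x ^ (s + 1) / (s + 1)! :=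
  sum_range_succ _ _

@[simp]
theorem expTaylor_zero_left (x : ℝ) : expTaylor 0 x = 1 := by
  simp [expTaylor]

@[simp]
theorem expTaylor_zero_right (s : ℕ) : expTaylor s 0 = 1 := by
  simp [expTaylor, sum_range_succ']

theorem hasDerivAt_expTaylor_succ (s : ℕ) (x : ℝ) :
    HasDerivAt (expTaylor (s + 1)) (expTaylor s x) x := by
  induction s with
  | zero =>
    have h : expTaylor 1 = fun y => 1 + y := funext fun y => by simp [expTaylor_succ]
    rw [h, expTaylor_zero_left]
    simpa using (hasDerivAt_id x).const_add 1
  | succ s ih =>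
    have hpow : HasDerivAt (fun y : ℝ => y ^ (s + 2) / (s + 2)!) (x ^ (s + 1) / (s + 1)!) x := by
      refine ((hasDerivAt_pow (s + 2) x).div_const _).congr_deriv ?_
      rw [Nat.factorial_succ (s + 1)]
      push_cast
      field_simp
      ring
    rw [show expTaylor (s + 2) = fun y => expTaylor (s + 1) y + y ^ (s + 2) / (s + 2)! from
      funext fun y => expTaylor_succ _ _, expTaylor_succ]
    exact ih.add hpow

theorem antitoneOn_exp_neg_mul_sub_expTaylor (s : ℕ) (b : ℝ) :
    AntitoneOn (fun x => exp (-x) * (b ^ (s + 1) / (s + 1)! - expTaylor (s + 1) x))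
      (Set.Icc 0 b) := by
  have hderiv : ∀ x,
      HasDerivAt (fun x => exp (-x) * (b ^ (s + 1) / (s + 1)! - expTaylor (s + 1) x))
        (exp (-x) * (x ^ (s + 1) / (s + 1)! - b ^ (s + 1) / (s + 1)!)) x := fun x => by
    refine ((hasDerivAt_neg x).exp.mul
      ((hasDerivAt_expTaylor_succ s x).const_sub _)).congr_deriv ?_
    rw [expTaylor_succ]
    ring
  refine antitoneOn_of_deriv_nonpos (convex_Icc 0 b)
    (fun x _ => (hderiv x).continuousAt.continuousWithinAt)
    (fun x _ => (hderiv x).differentiableAt.differentiableWithinAt) fun x hx => ?_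
  rw [interior_Icc] at hx
  rw [(hderiv x).deriv]
  have : x ^ (s + 1) ≤ b ^ (s + 1) := pow_le_pow_left₀ hx.1.le hx.2.le _
  have : x ^ (s + 1) / (s + 1)! ≤ b ^ (s + 1) / (s + 1)! := by gcongr
  exact mul_nonpos_of_nonneg_of_nonpos (exp_pos _).le (by linarith)

theorem expTaylor_succ_add_le (s : ℕ) {a b : ℝ} (ha : 0 ≤ a) (hab : a ≤ b) :
    expTaylor (s + 1) a + (1 - exp (a - b)) * expTaylor s b ≤ expTaylor (s + 1) b := by
  have h := antitoneOn_exp_neg_mul_sub_expTaylor s b ⟨ha, hab⟩ ⟨ha.trans hab, le_rfl⟩ hab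
  have hscaled := mul_le_mul_of_nonneg_left h (exp_pos a).le
  rw [← mul_assoc, ← mul_assoc, ← exp_add, ← exp_add, add_neg_cancel, exp_zero, one_mul,
    ← sub_eq_add_neg, expTaylor_succ s b] at hscaled
  rw [expTaylor_succ s b]
  linarith

theorem altBinomSum_le_expTaylor_log (s n : ℕ) : altBinomSum s n ≤ expTaylor s (log n) := by
  induction s generalizing n with
  | zero =>
    rcases eq_or_ne n 0 with rfl | hn
    · simp
    · simp [altBinomSum_zero_left hn]
  | succ s ihs =>
    induction n with
    | zero => simp
    | succ n ihn =>
      rcases eq_or_ne n 0 with rfl | hn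
      · simp
      have hn' : (0 : ℝ) < n := by positivity
      have hcoef : 1 - exp (log n - log (n + 1)) = 1 / (n + 1) := by
        rw [exp_sub, exp_log hn', exp_log (by positivity)]
        field_simp
        ring
      calc altBinomSum (s + 1) (n + 1)
          = altBinomSum (s + 1) n + altBinomSum s (n + 1) / (n + 1) := altBinomSum_succ_succ s n
        _ ≤ expTaylor (s + 1) (log n) + 1 / (n + 1) * expTaylor s (log (n + 1)) := by
          rw [one_div_mul_eq_div]
          have ihs' := ihs (n + 1)
          push_cast at ihs'
          gcongr
        _ ≤ expTaylor (s + 1) (log (n + 1)) := by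
          rw [← hcoef]
          exact expTaylor_succ_add_le s
            (log_nonneg (by exact_mod_cast Nat.one_le_iff_ne_zero.mpr hn))
            (log_le_log hn' (by linarith))
        _ = expTaylor (s + 1) (log ↑(n + 1)) := by push_cast; rfl

/-- For all `m ≥ 2` and `n ≥ 1`,
`(ln n)^(m−1)/(m−1)! ≤ E[U^C(m,n)] ≤ Σ_(k=0)^(m−1) (ln n)^k/k!`. -/
theorem stmt12 (m n : ℕ) (hm : 2 ≤ m) (hn : 1 ≤ n) :
    (Real.log n) ^ (m - 1) / (Nat.factorial (m - 1) : ℝ) ≤ expUC m n ∧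
    expUC m n ≤ ∑ k ∈ Finset.range m, (Real.log n) ^ k / (Nat.factorial k : ℝ) := by
  obtain ⟨s, rfl⟩ : ∃ s, m = s + 1 := ⟨m - 1, by omega⟩
  rw [Nat.add_sub_cancel, expUC_succ]
  refine ⟨?_, altBinomSum_le_expTaylor_log s n⟩
  have hlog : log n ≤ harmonic n := by simpa using log_le_harmonic_floor n n.cast_nonneg
  calc log n ^ s / s ! ≤ (harmonic n : ℝ) ^ s / s ! := by
        gcongr
    _ ≤ altBinomSum s n := harmonic_pow_div_factorial_le_altBinomSum s (by omega)
end

section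
/- For all m, n ≥ 1, the expected number of Column's strictly undominated actions in a random game G(m,n) satisfies E[U^C(m,n)] ≥ n·(1 − (n−1)/2^m). Consequently, if m(n) − log₂ n → ∞ as n → ∞ (with m(n) ≤ n), then E[U^C(m(n),n)]/n → 1. -/
open Finset Filter

section Aux
open Classical

lemma perm_half {n : ℕ} {j j' : Fin n} (h : j ≠ j') :
    2 * (Finset.univ.filter fun σ : Equiv.Perm (Fin n) => σ j < σ j').card
      = Fintype.card (Equiv.Perm (Fin n)) := by
  classical
  have hbij : (Finset.univ.filter fun σ : Equiv.Perm (Fin n) => σ j < σ j').card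
      = (Finset.univ.filter fun σ : Equiv.Perm (Fin n) => σ j' < σ j).card := by
    apply Finset.card_bij' (fun σ _ => σ * Equiv.swap j j') (fun σ _ => σ * Equiv.swap j j')
    · intro σ hσ
      simp only [Finset.mem_filter, Finset.mem_univ, true_and, Equiv.Perm.mul_apply,
        Equiv.swap_apply_left, Equiv.swap_apply_right] at hσ ⊢
      exact hσ
    · intro σ hσ
      simp only [Finset.mem_filter, Finset.mem_univ, true_and, Equiv.Perm.mul_apply,
        Equiv.swap_apply_left, Equiv.swap_apply_right] at hσ ⊢
      exact hσ
    · intro σ _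
      simp [mul_assoc]
    · intro σ _
      simp [mul_assoc]
  have hsplit := Finset.card_filter_add_card_filter_not
    (s := (Finset.univ : Finset (Equiv.Perm (Fin n))))
    (p := fun σ => σ j < σ j')
  have hneg : (Finset.univ.filter fun σ : Equiv.Perm (Fin n) => ¬ σ j < σ j').card
      = (Finset.univ.filter fun σ : Equiv.Perm (Fin n) => σ j' < σ j).card := by
    congr 1
    apply Finset.filter_congr
    intro σ _
    have hne : σ j ≠ σ j' := fun hc => h (σ.injective hc)
    constructor
    · intro hnlt; exact lt_of_le_of_ne (not_lt.mp hnlt) (Ne.symm hne)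
    · intro hlt; exact not_lt.mpr hlt.le
  rw [hneg, ← hbij] at hsplit
  rw [two_mul, hsplit]
  simp


lemma event_count (m n : ℕ) {j j' : Fin n} (h : j ≠ j') :
    2 ^ m * (Finset.univ.filter fun ω : Omega m n => ∀ i, (ω.2 i) j < (ω.2 i) j').card
      = Fintype.card (Omega m n) := by
  classical
  have hsub : (Finset.univ.filter fun ω : Omega m n => ∀ i, (ω.2 i) j < (ω.2 i) j').card
      = Fintype.card {ω : Omega m n // ∀ i, (ω.2 i) j < (ω.2 i) j'} :=
    (Fintype.card_subtype _).symm
  have e : {ω : Omega m n // ∀ i, (ω.2 i) j < (ω.2 i) j'} ≃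
      (Fin n → Equiv.Perm (Fin m)) × (Fin m → {σ : Equiv.Perm (Fin n) // σ j < σ j'}) :=
    { toFun := fun ω => (ω.1.1, fun i => ⟨ω.1.2 i, ω.2 i⟩)
      invFun := fun p => ⟨(p.1, fun i => (p.2 i).1), fun i => (p.2 i).2⟩
      left_inv := fun _ => rfl
      right_inv := fun _ => rfl }
  have hK : Fintype.card {σ : Equiv.Perm (Fin n) // σ j < σ j'}
      = (Finset.univ.filter fun σ : Equiv.Perm (Fin n) => σ j < σ j').card :=
    Fintype.card_subtype _
  have hOmega : Fintype.card (Omega m n)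
      = Fintype.card (Fin n → Equiv.Perm (Fin m))
        * Fintype.card (Equiv.Perm (Fin n)) ^ m := by
    simp only [Fintype.card_prod, Fintype.card_fun, Fintype.card_fin]
  rw [hsub, Fintype.card_congr e, hOmega]
  simp only [Fintype.card_prod, Fintype.card_fun, Fintype.card_fin]
  rw [hK, ← perm_half h]
  ring


lemma expUC_lower (m n : ℕ) (hm : 1 ≤ m) (hn : 1 ≤ n) :
    (n : ℝ) * (1 - ((n : ℝ) - 1) / 2 ^ m) ≤ expUC m n := by
  classical
  set D : Omega m n → ℕ := fun ω =>
    (Finset.univ.filter fun j => ColDomIn (CPay ω) Finset.univ Finset.univ j).card with hDdef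
  have hΩpos : (0:ℝ) < (Fintype.card (Omega m n) : ℝ) := by exact_mod_cast Fintype.card_pos
  -- UC ω = n - D ω (as reals)
  have hUC : ∀ ω : Omega m n, (UC ω : ℝ) = (n : ℝ) - (D ω : ℝ) := by
    intro ω
    have hsplit : D ω + UC ω = n := by
      rw [hDdef, UC]
      rw [Finset.card_filter_add_card_filter_not
        (p := fun j => ColDomIn (CPay ω) Finset.univ Finset.univ j)]
      simp
    have : (D ω : ℝ) + (UC ω : ℝ) = (n : ℝ) := by exact_mod_cast hsplit
    linarith
  -- pointwise bound on D ω
  have hpoint : ∀ ω : Omega m n, D ω ≤ ∑ j : Fin n, ∑ j' ∈ Finset.univ.erase j,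
      (if (∀ i, (ω.2 i) j < (ω.2 i) j') then 1 else 0) := by
    intro ω
    simp only [hDdef]
    rw [Finset.card_filter]
    apply Finset.sum_le_sum
    intro j _
    by_cases hdom : ColDomIn (CPay ω) Finset.univ Finset.univ j
    · obtain ⟨j', hj'mem, hj'⟩ := hdom
      have hne : j' ≠ j := by
        rintro rfl
        exact lt_irrefl _ (hj' ⟨0, hm⟩ (Finset.mem_univ _))
      have hev : ∀ i, (ω.2 i) j < (ω.2 i) j' := by
        intro i
        have h1 := hj' i (Finset.mem_univ i)
        have h2 : (((ω.2 i) j : ℕ) : ℝ) < (((ω.2 i) j' : ℕ) : ℝ) := h1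
        have h3 : ((ω.2 i) j : ℕ) < ((ω.2 i) j' : ℕ) := by exact_mod_cast h2
        exact h3
      rw [if_pos ⟨j', hj'mem, hj'⟩]
      calc 1 = (if (∀ i, (ω.2 i) j < (ω.2 i) j') then 1 else 0) := (if_pos hev).symm
        _ ≤ _ := Finset.single_le_sum (f := fun j' =>
              (if (∀ i, (ω.2 i) j < (ω.2 i) j') then 1 else 0))
            (fun _ _ => Nat.zero_le _) (Finset.mem_erase.mpr ⟨hne, Finset.mem_univ _⟩)
    · simp [hdom]
  -- key counting inequality
  have key : 2 ^ m * ∑ ω : Omega m n, D ω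
      ≤ n * ((n - 1) * Fintype.card (Omega m n)) := by
    calc 2 ^ m * ∑ ω : Omega m n, D ω
        ≤ 2 ^ m * ∑ ω : Omega m n, ∑ j : Fin n, ∑ j' ∈ Finset.univ.erase j,
            (if (∀ i, (ω.2 i) j < (ω.2 i) j') then 1 else 0) :=
          Nat.mul_le_mul_left _ (Finset.sum_le_sum fun ω _ => hpoint ω)
      _ = ∑ j : Fin n, ∑ j' ∈ Finset.univ.erase j,
            2 ^ m * (Finset.univ.filter fun ω : Omega m n =>
              ∀ i, (ω.2 i) j < (ω.2 i) j').card := by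
          have hswap : (∑ ω : Omega m n, ∑ j : Fin n, ∑ j' ∈ Finset.univ.erase j,
              (if (∀ i, (ω.2 i) j < (ω.2 i) j') then 1 else 0))
              = ∑ j : Fin n, ∑ j' ∈ Finset.univ.erase j, ∑ ω : Omega m n,
              (if (∀ i, (ω.2 i) j < (ω.2 i) j') then 1 else 0) := by
            rw [Finset.sum_comm]
            exact Finset.sum_congr rfl fun j _ => Finset.sum_comm
          rw [hswap, Finset.mul_sum]
          apply Finset.sum_congr rfl
          intro j _
          rw [Finset.mul_sum]
          apply Finset.sum_congr rfl
          intro j' _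
          rw [Finset.card_filter]
      _ = ∑ j : Fin n, ∑ j' ∈ Finset.univ.erase j, Fintype.card (Omega m n) := by
          apply Finset.sum_congr rfl
          intro j _
          apply Finset.sum_congr rfl
          intro j' hj'
          exact event_count m n (Finset.ne_of_mem_erase hj').symm
      _ = n * ((n - 1) * Fintype.card (Omega m n)) := by
          simp [Finset.card_erase_of_mem, Finset.card_univ, Finset.mul_sum]
  -- conclude
  have hS : (∑ ω : Omega m n, (D ω : ℝ)) * 2 ^ m
      ≤ (n : ℝ) * (((n : ℝ) - 1) * Fintype.card (Omega m n)) := by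
    have hc : ((2 ^ m * ∑ ω : Omega m n, D ω : ℕ) : ℝ)
        ≤ ((n * ((n - 1) * Fintype.card (Omega m n)) : ℕ) : ℝ) := by exact_mod_cast key
    push_cast [Nat.cast_sub hn] at hc
    linarith
  have h2 : (0:ℝ) < 2 ^ m := by positivity
  rw [expUC, le_div_iff₀ hΩpos]
  have hsum : ∑ ω : Omega m n, (UC ω : ℝ)
      = (n : ℝ) * Fintype.card (Omega m n) - ∑ ω : Omega m n, (D ω : ℝ) := by
    rw [Finset.sum_congr rfl fun ω _ => hUC ω, Finset.sum_sub_distrib,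
      Finset.sum_const, Finset.card_univ, nsmul_eq_mul, mul_comm]
  rw [hsum]
  have hineq : (∑ ω : Omega m n, (D ω : ℝ))
      ≤ (n : ℝ) * (((n : ℝ) - 1) * Fintype.card (Omega m n)) / 2 ^ m :=
    (le_div_iff₀ h2).mpr hS
  have hid : (n : ℝ) * (1 - ((n : ℝ) - 1) / 2 ^ m) * Fintype.card (Omega m n)
      = (n : ℝ) * Fintype.card (Omega m n)
        - (n : ℝ) * (((n : ℝ) - 1) * Fintype.card (Omega m n)) / 2 ^ m := by
    field_simp
  linarith


lemma expUC_le (m n : ℕ) : expUC m n ≤ n := by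
  classical
  have hΩ : (0:ℝ) < (Fintype.card (Omega m n) : ℝ) := by exact_mod_cast Fintype.card_pos
  rw [expUC, div_le_iff₀ hΩ]
  calc ∑ ω : Omega m n, (UC ω : ℝ) ≤ ∑ _ω : Omega m n, (n:ℝ) := by
        apply Finset.sum_le_sum
        intro ω _
        have h1 : UC ω ≤ n := by
          rw [UC]
          exact (Finset.card_filter_le _ _).trans (by simp)
        exact_mod_cast h1
    _ = (n:ℝ) * Fintype.card (Omega m n) := by
        rw [Finset.sum_const, Finset.card_univ, nsmul_eq_mul, mul_comm]


end Aux


/-- For all `m, n ≥ 1`, `E[U^C(m,n)] ≥ n·(1 − (n−1)/2^m)`; consequently,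
if `m(n) − log₂ n → ∞` (with `m(n) ≤ n`), then `E[U^C(m(n),n)]/n → 1`. -/
theorem stmt14 :
    (∀ m n : ℕ, 1 ≤ m → 1 ≤ n →
      (n : ℝ) * (1 - ((n : ℝ) - 1) / 2 ^ m) ≤ expUC m n) ∧
    ∀ m : ℕ → ℕ, (∀ n, m n ≤ n) →
      Filter.Tendsto (fun n : ℕ => (m n : ℝ) - Real.logb 2 n) Filter.atTop Filter.atTop →
      Filter.Tendsto (fun n : ℕ => expUC (m n) n / (n : ℝ)) Filter.atTop (nhds 1) := by
  constructor
  · exact fun m n hm hn => expUC_lower m n hm hn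
  · intro m _ hT
    have hev : ∀ᶠ n : ℕ in Filter.atTop, 1 ≤ m n ∧ 1 ≤ n := by
      filter_upwards [hT.eventually_ge_atTop 1, Filter.eventually_ge_atTop 1] with n h1 h2
      refine ⟨?_, h2⟩
      have hlogb : (0:ℝ) ≤ Real.logb 2 n := Real.logb_nonneg one_lt_two (by exact_mod_cast h2)
      have : (1:ℝ) ≤ (m n : ℝ) := by linarith
      exact_mod_cast this
    -- the error term tends to 0
    have herr : Filter.Tendsto (fun n : ℕ => ((n:ℝ) - 1) / 2 ^ (m n))
        Filter.atTop (nhds 0) := by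
      have hbound : ∀ᶠ n : ℕ in Filter.atTop,
          ((n:ℝ) - 1) / 2 ^ (m n) ≤ Real.exp (Real.log 2 * (Real.logb 2 n - m n)) := by
        filter_upwards [Filter.eventually_ge_atTop 1] with n hn
        have hnpos : (0:ℝ) < n := by exact_mod_cast hn
        have hpow : (2:ℝ) ^ (m n) = Real.exp (Real.log 2 * (m n)) := by
          rw [← Real.rpow_natCast 2 (m n), Real.rpow_def_of_pos two_pos]
        have hlog : Real.log 2 * Real.logb 2 n = Real.log n := by
          rw [Real.logb, mul_div_cancel₀]
          exact Real.log_ne_zero_of_pos_of_ne_one two_pos (by norm_num)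
        have heq : (n:ℝ) / 2 ^ (m n) = Real.exp (Real.log 2 * (Real.logb 2 n - m n)) := by
          rw [mul_sub, Real.exp_sub, hlog, Real.exp_log hnpos, hpow]
        rw [← heq]
        gcongr
        · linarith
      have hnonneg : ∀ᶠ n : ℕ in Filter.atTop, (0:ℝ) ≤ ((n:ℝ) - 1) / 2 ^ (m n) := by
        filter_upwards [Filter.eventually_ge_atTop 1] with n hn
        have h1 : (1:ℝ) ≤ n := by exact_mod_cast hn
        have h2 : (0:ℝ) < 2 ^ (m n) := by positivity
        have h3 : (0:ℝ) ≤ (n:ℝ) - 1 := by linarith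
        exact div_nonneg h3 h2.le
      have hexp : Filter.Tendsto (fun n : ℕ => Real.exp (Real.log 2 * (Real.logb 2 n - m n)))
          Filter.atTop (nhds 0) := by
        apply Real.tendsto_exp_atBot.comp
        have h1 : Filter.Tendsto (fun n : ℕ => Real.log 2 * ((m n : ℝ) - Real.logb 2 n))
            Filter.atTop Filter.atTop :=
          Filter.Tendsto.const_mul_atTop (Real.log_pos (by norm_num)) hT
        have h2 : (fun n : ℕ => Real.log 2 * (Real.logb 2 n - m n))
            = fun n : ℕ => -(Real.log 2 * ((m n : ℝ) - Real.logb 2 n)) := by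
          funext n; ring
        rw [h2]
        exact Filter.tendsto_neg_atBot_iff.mpr h1
      exact tendsto_of_tendsto_of_tendsto_of_le_of_le' tendsto_const_nhds hexp hnonneg hbound
    have hg : Filter.Tendsto (fun n : ℕ => 1 - ((n:ℝ) - 1) / 2 ^ (m n))
        Filter.atTop (nhds 1) := by
      have := (tendsto_const_nhds (x := (1:ℝ)) (f := Filter.atTop (α := ℕ))).sub herr
      simpa using this
    apply tendsto_of_tendsto_of_tendsto_of_le_of_le' hg tendsto_const_nhds
    · filter_upwards [hev] with n hn
      have hnpos : (0:ℝ) < n := by exact_mod_cast hn.2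
      rw [le_div_iff₀ hnpos, mul_comm]
      exact expUC_lower (m n) n hn.1 hn.2
    · filter_upwards [hev] with n hn
      have hnpos : (0:ℝ) < n := by exact_mod_cast hn.2
      rw [div_le_one hnpos]
      exact expUC_le (m n) n
end

section
/- For every ε with 0 < ε < 1/3, there exists N such that for all n ≥ N, the probability that a random balanced game G(n,n) is strict-dominance solvable satisfies π(n,n) ≤ n^{−(1/3−ε)·n}. -/
open Finset Filter

/-! If the game is solvable, consider the first round after which some player, say Row, keeps
fewer than `s` actions while Column still keeps at least `s`. Every eliminated row is strictly
dominated, on any `s` of those columns, by a surviving row. This yields `n - s` rows `D`, a map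
`e` sending them outside `D`, and `s` columns whose payoff permutations `σ` all satisfy
`σ i < σ (e i)` on `D`. A uniform permutation does so with probability at most
`1 / (n - s + 1)`: within each fiber of `e`, its target must beat the whole fiber. A union bound
over the at most `2 ^ n * 2 ^ n * n ^ (n - s)` choices, for both players, gives
`π(n,n) ≤ 2 * 4 ^ n * n ^ (n - s) / (n - s + 1) ^ s`, and `s ≈ (2/3 - ε/4) n` makes this at
most `n ^ (-(1/3 - ε) n)`. -/

section Elimination

variable {m n : ℕ} (R C : Fin m → Fin n → ℝ)

noncomputable def elimIter (t : ℕ) : Finset (Fin m) × Finset (Fin n) :=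
  (elimStep R C)^[t] (univ, univ)

lemma elimIter_succ (t : ℕ) : elimIter R C (t + 1) = elimStep R C (elimIter R C t) :=
  Function.iterate_succ_apply' _ _ _

lemma elimStep_le (p : Finset (Fin m) × Finset (Fin n)) : elimStep R C p ≤ p := by
  classical
  exact ⟨filter_subset _ _, filter_subset _ _⟩

lemma elimIter_antitone : Antitone (elimIter R C) :=
  antitone_nat_of_succ_le fun t => (elimIter_succ R C t).symm ▸ elimStep_le R C _

lemma rowDomIn_of_mem_of_notMem_elimStep {p : Finset (Fin m) × Finset (Fin n)} {i : Fin m}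
    (hi : i ∈ p.1) (hi' : i ∉ (elimStep R C p).1) : RowDomIn R p.1 p.2 i := by
  classical
  simpa [elimStep, hi] using hi'

lemma semiconj_swap_elimStep :
    Function.Semiconj Prod.swap (elimStep R C) (elimStep (fun j i => C i j) (fun j i => R i j)) :=
  fun _ => rfl

lemma elimIter_transpose (t : ℕ) :
    elimIter (fun j i => C i j) (fun j i => R i j) t = (elimIter R C t).swap :=
  ((semiconj_swap_elimStep R C).iterate_right t (univ, univ)).symm

end Elimination

section Certificate

variable {α ι γ : Type*} [Fintype α] [DecidableEq α]

-- Normalised to the identity off `D`, so that only the values on `D` are counted.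
def escapeMaps (D : Finset α) : Finset (α → α) :=
  Fintype.piFinset fun i => if i ∈ D then Dᶜ else {i}

lemma card_escapeMaps_le (D : Finset α) : #(escapeMaps D) ≤ Fintype.card α ^ #D := by
  rw [escapeMaps, Fintype.card_piFinset]
  calc ∏ i, #(if i ∈ D then Dᶜ else {i}) = ∏ i, if i ∈ D then #Dᶜ else 1 :=
        prod_congr rfl fun i _ => by split_ifs <;> simp
    _ = #Dᶜ ^ #D := by rw [prod_ite_mem, univ_inter, prod_const]
    _ ≤ Fintype.card α ^ #D := Nat.pow_le_pow_left (card_le_univ _) _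

lemma apply_notMem_of_mem_escapeMaps {D : Finset α} {e : α → α} (he : e ∈ escapeMaps D)
    {i : α} (hi : i ∈ D) : e i ∉ D := by
  simpa [escapeMaps, hi] using Fintype.mem_piFinset.mp he i

def DominationCert [LT γ] (V : α → ι → γ) (s : ℕ) : Prop :=
  ∃ Y : Finset ι, #Y = s ∧ ∃ D : Finset α, #D = Fintype.card α - s ∧
    ∃ e ∈ escapeMaps D, ∀ i ∈ D, ∀ j ∈ Y, V i j < V (e i) j

lemma exists_mem_dominating [LinearOrder γ] (V : α → ι → γ) (X : Finset α) {W : Finset ι}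
    (hW : W.Nonempty) (h : ∀ i ∉ X, ∃ i', ∀ j ∈ W, V i j < V i' j) {i : α}
    (hi : i ∉ X) :
    ∃ i' ∈ X, ∀ j ∈ W, V i j < V i' j := by
  obtain ⟨j₀, hj₀⟩ := hW
  obtain ⟨i₁, hi₁⟩ := h i hi
  -- A row weakly dominating `i₁` and best in column `j₀` among such rows is undominated.
  obtain ⟨x, hx, hmax⟩ := exists_max_image ({x | ∀ j ∈ W, V i₁ j ≤ V x j} : Finset α)
    (V · j₀) ⟨i₁, by simp⟩
  simp only [mem_filter, mem_univ, true_and] at hx hmax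
  by_cases hxX : x ∈ X
  · exact ⟨x, hxX, fun j hj => (hi₁ j hj).trans_le (hx j hj)⟩
  · obtain ⟨x', hx'⟩ := h x hxX
    exact absurd (hmax x' fun j hj => (hx j hj).trans (hx' j hj).le) (hx' j₀ hj₀).not_ge

lemma dominationCert_of_forall_notMem [LT γ] {V : α → ι → γ} {s : ℕ} {X : Finset α}
    {W : Finset ι} (hW : #W = s) (hX : #X ≤ s)
    (h : ∀ i ∉ X, ∃ i' ∈ X, ∀ j ∈ W, V i j < V i' j) : DominationCert V s := by
  choose! f hfX hf using h
  obtain ⟨D, hDX, hD⟩ := exists_subset_card_eq (s := Xᶜ) (n := Fintype.card α - s)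
    (by rw [card_compl]; omega)
  refine ⟨W, hW, D, hD, fun i => if i ∈ D then f i else i, ?_, fun i hi j hj => ?_⟩
  · refine Fintype.mem_piFinset.mpr fun i => ?_
    by_cases hi : i ∈ D
    · simpa [hi] using fun hfi => mem_compl.mp (hDX hfi) (hfX i (mem_compl.mp (hDX hi)))
    · simp [hi]
  · simpa [hi] using hf i (mem_compl.mp (hDX hi)) j hj

end Certificate

section Collapse

variable {m n : ℕ} {R C : Fin m → Fin n → ℝ} {s : ℕ}

lemma dominationCert_of_card_le {t : ℕ} (hs : 0 < s) (hY : s ≤ #(elimIter R C t).2)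
    (hX : #(elimIter R C (t + 1)).1 ≤ s) : DominationCert R s := by
  obtain ⟨W, hWY, hW⟩ := exists_subset_card_eq hY
  refine dominationCert_of_forall_notMem hW hX fun i hi => ?_
  refine exists_mem_dominating R _ (card_pos.mp (hW ▸ hs)) (fun i hi => ?_) hi
  obtain ⟨t', hit', hit'₁⟩ := Nat.exists_not_and_succ_of_not_zero_of_exists
    (p := fun t => i ∉ (elimIter R C t).1) (by simp [elimIter]) ⟨_, hi⟩
  rw [not_not] at hit'
  have ht' : t' ≤ t := by
    by_contra! h
    exact hi ((elimIter_antitone R C (Nat.succ_le_of_lt h)).1 hit')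
  obtain ⟨i', -, hi'⟩ := rowDomIn_of_mem_of_notMem_elimStep R C hit'
    (elimIter_succ R C t' ▸ hit'₁)
  exact ⟨i', fun j hj => hi' j ((elimIter_antitone R C ht').2 (hWY hj))⟩

lemma dominationCert_or_of_solvable (hs : 2 ≤ s) (hm : s ≤ m) (hn : s ≤ n)
    (h : Solvable R C) : DominationCert R s ∨ DominationCert (fun j i => C i j) s := by
  have hsurv : #(elimIter R C (m + n)).1 = 1 := h.1
  obtain ⟨t, ht, ht₁⟩ := Nat.exists_not_and_succ_of_not_zero_of_exists
    (p := fun t => ¬ (s ≤ #(elimIter R C t).1 ∧ s ≤ #(elimIter R C t).2))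
    (by simp [elimIter, hm, hn]) ⟨m + n, fun h' => by omega⟩
  rw [not_not] at ht
  rcases not_and_or.mp ht₁ with hX | hY
  · exact .inl (dominationCert_of_card_le (by omega) ht.2 (by omega))
  · refine .inr (dominationCert_of_card_le (C := fun j i => R i j) (t := t) (by omega) ?_ ?_) <;>
      simp only [elimIter_transpose, Prod.fst_swap, Prod.snd_swap] <;> omega

end Collapse

section PermutationCount

open Equiv

variable {α : Type*} [DecidableEq α] [LinearOrder α] {D : Finset α} {e : α → α}
  {σ : Perm α} {v u : α}

lemma mul_swap_apply_lt_of_mem_insert_filter (hv : v ∉ D) (hσ : ∀ i ∈ D, σ i < σ (e i))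
    (hu : u ∈ insert v {i ∈ D | e i = v}) {x : α} (hx : x ∈ insert v {i ∈ D | e i = v})
    (hxu : x ≠ u) : (σ * swap v u) x < (σ * swap v u) u := by
  simp only [mem_insert, mem_filter] at hu hx
  rw [Perm.mul_apply, Perm.mul_apply, swap_apply_right]
  rcases hx with rfl | ⟨hxD, rfl⟩
  · obtain rfl | ⟨huD, rfl⟩ := hu
    · exact absurd rfl hxu
    · rw [swap_apply_left]
      exact hσ u huD
  · rw [swap_apply_of_ne_of_ne (ne_of_mem_of_not_mem hxD hv) hxu]
    exact hσ x hxD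

lemma mul_swap_apply_lt_of_mem_filter (he : ∀ i ∈ D, e i ∉ D) (hv : v ∉ D)
    (hσ : ∀ i ∈ D, σ i < σ (e i)) (hu : u ∈ insert v {i ∈ D | e i = v}) {i : α}
    (hi : i ∈ D ∧ e i ≠ v) : (σ * swap v u) i < (σ * swap v u) (e i) := by
  simp only [mem_insert, mem_filter] at hu
  have hiu : i ≠ u := by rintro rfl; rcases hu with rfl | hu; exacts [hv hi.1, hi.2 hu.2]
  have heu : e i ≠ u := by rintro rfl; rcases hu with rfl | hu; exacts [hi.2 rfl, he i hi.1 hu.1]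
  rw [Perm.mul_apply, Perm.mul_apply, swap_apply_of_ne_of_ne (ne_of_mem_of_not_mem hi.1 hv) hiu,
    swap_apply_of_ne_of_ne hi.2 heu]
  exact hσ i hi.1

lemma card_filter_perm_lt_mul_le_of_fiber [Fintype α] (he : ∀ i ∈ D, e i ∉ D)
    (hv : v ∉ D) :
    #{σ : Perm α | ∀ i ∈ D, σ i < σ (e i)} * (#{i ∈ D | e i = v} + 1) ≤
      #{σ : Perm α | ∀ i ∈ {i ∈ D | e i ≠ v}, σ i < σ (e i)} := by
  rw [← card_insert_of_notMem fun h => hv (mem_filter.mp h).1, ← card_product]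
  refine card_le_card_of_injOn (fun p => p.1 * swap v p.2) (fun p hp => ?_) ?_
  · simp only [coe_product, Set.mem_prod, mem_coe, mem_filter, mem_univ, true_and] at hp ⊢
    exact fun i hi => mul_swap_apply_lt_of_mem_filter he hv hp.1 hp.2 hi
  · rintro ⟨σ, u⟩ hp ⟨τ, u'⟩ hq (h : σ * swap v u = τ * swap v u')
    simp only [coe_product, Set.mem_prod, mem_coe, mem_filter, mem_univ, true_and] at hp hq
    -- `u` is where `σ * swap v u` is largest on the fiber of `v` together with `v` itself.
    obtain rfl : u = u' := by
      by_contra hne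
      have h₁ := mul_swap_apply_lt_of_mem_insert_filter hv hp.1 hp.2 hq.2 (Ne.symm hne)
      have h₂ := mul_swap_apply_lt_of_mem_insert_filter hv hq.1 hq.2 hp.2 hne
      rw [h] at h₁
      exact lt_asymm h₁ h₂
    simpa using mul_right_cancel h

theorem card_filter_perm_lt_mul_le [Fintype α] (D : Finset α) (e : α → α)
    (he : ∀ i ∈ D, e i ∉ D) :
    #{σ : Perm α | ∀ i ∈ D, σ i < σ (e i)} * (#D + 1) ≤ Fintype.card (Perm α) := by
  induction D using Finset.strongInduction with
  | H D ih =>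
  rcases D.eq_empty_or_nonempty with rfl | ⟨i₀, hi₀⟩
  · simp
  set D' := {i ∈ D | e i ≠ e i₀}
  have hD' : D' ⊂ D := filter_ssubset.mpr ⟨i₀, hi₀, not_not.mpr rfl⟩
  have hcard : #D + 1 ≤ (#{i ∈ D | e i = e i₀} + 1) * (#D' + 1) := by
    rw [← card_filter_add_card_filter_not (fun i => e i = e i₀)]
    nlinarith
  calc _ ≤ #{σ : Perm α | ∀ i ∈ D, σ i < σ (e i)} * (#{i ∈ D | e i = e i₀} + 1) *
          (#D' + 1) :=
        (Nat.mul_le_mul_left _ hcard).trans_eq (mul_assoc _ _ _).symm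
    _ ≤ #{σ : Perm α | ∀ i ∈ D', σ i < σ (e i)} * (#D' + 1) :=
        Nat.mul_le_mul_right _ (card_filter_perm_lt_mul_le_of_fiber he (he i₀ hi₀))
    _ ≤ _ := ih D' hD' fun i hi hei => he i (hD'.subset hi) (hD'.subset hei)

end PermutationCount

section Counting

open Equiv

lemma card_biUnion_mul_le {κ β : Type*} [DecidableEq β] (s : Finset κ) (f : κ → Finset β)
    {K M : ℕ} (h : ∀ a ∈ s, #(f a) * K ≤ M) : #(s.biUnion f) * K ≤ #s * M :=
  calc #(s.biUnion f) * K ≤ (∑ a ∈ s, #(f a)) * K := Nat.mul_le_mul_right _ card_biUnion_le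
    _ = ∑ a ∈ s, #(f a) * K := sum_mul _ _ _
    _ ≤ #s * M := sum_le_card_nsmul _ _ _ h

variable {ι α : Type*} [Fintype ι] [DecidableEq ι] [Fintype α] [DecidableEq α]

lemma card_filter_forall_mem_mul_pow_le {β : Type*} [Fintype β] [DecidableEq β] (Y : Finset ι)
    (S : Finset β) {k : ℕ} (h : #S * k ≤ Fintype.card β) :
    #{f : ι → β | ∀ j ∈ Y, f j ∈ S} * k ^ #Y ≤ Fintype.card β ^ Fintype.card ι := by
  have hpi : ({f : ι → β | ∀ j ∈ Y, f j ∈ S} : Finset _) =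
      Fintype.piFinset fun j => if j ∈ Y then S else univ := by
    ext f
    simp only [mem_filter, mem_univ, true_and, Fintype.mem_piFinset]
    exact forall_congr' fun j => by split_ifs with hj <;> simp [hj]
  calc #{f : ι → β | ∀ j ∈ Y, f j ∈ S} * k ^ #Y
      = (∏ j, #(if j ∈ Y then S else univ)) * ∏ j, if j ∈ Y then k else 1 := by
        rw [hpi, Fintype.card_piFinset, prod_ite_mem, univ_inter, prod_const]
    _ = ∏ j, #(if j ∈ Y then S else univ) * (if j ∈ Y then k else 1) := prod_mul_distrib.symm
    _ ≤ ∏ _j : ι, Fintype.card β :=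
        prod_le_prod (fun _ _ => Nat.zero_le _) fun j _ => by split_ifs <;> simp [h]
    _ = Fintype.card β ^ Fintype.card ι := by rw [prod_const, card_univ]

variable [LinearOrder α]

open Classical in
theorem card_dominationCert_mul_le (s : ℕ) :
    #{f : ι → Perm α | DominationCert (fun i j => f j i) s} * (Fintype.card α - s + 1) ^ s ≤
      2 ^ Fintype.card ι * (2 ^ Fintype.card α *
        (Fintype.card α ^ (Fintype.card α - s) * Fintype.card (Perm α) ^ Fintype.card ι)) := by
  set k := Fintype.card α - s
  set P : Finset α → (α → α) → Finset (Perm α) :=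
    fun D e => {σ | ∀ i ∈ D, σ i < σ (e i)} with hP
  have hsub : ({f : ι → Perm α | DominationCert (fun i j => f j i) s} : Finset _) ⊆
      (powersetCard s univ).biUnion fun Y => (powersetCard k univ).biUnion fun D =>
        (escapeMaps D).biUnion fun e => {f : ι → Perm α | ∀ j ∈ Y, f j ∈ P D e} := by
    intro f hf
    obtain ⟨Y, hY, D, hD, e, he, hlt⟩ := (mem_filter.mp hf).2
    simp only [mem_biUnion, mem_powersetCard, mem_filter, mem_univ, true_and, subset_univ, hP]
    exact ⟨Y, hY, D, hD, e, he, fun j hj i hi => hlt i hi j hj⟩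
  refine (Nat.mul_le_mul_right _ (card_le_card hsub)).trans ?_
  set M := Fintype.card α ^ k * Fintype.card (Perm α) ^ Fintype.card ι
  refine card_biUnion_mul_le _ _ (fun Y hY => card_biUnion_mul_le _ _ (M := M) fun D hD => ?_)
    |>.trans ?_
  · rw [mem_powersetCard] at hY hD
    refine (card_biUnion_mul_le _ _ fun e he => ?_).trans
      (Nat.mul_le_mul_right _ (hD.2 ▸ card_escapeMaps_le D))
    rw [← hY.2, ← hD.2]
    exact card_filter_forall_mem_mul_pow_le Y _
      (card_filter_perm_lt_mul_le D e fun i hi => apply_notMem_of_mem_escapeMaps he hi)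
  · gcongr
    · simpa using Nat.choose_le_two_pow _ _
    · simpa using Nat.choose_le_two_pow _ _

end Counting

section RandomGame

open Equiv

lemma dominationCert_comp_iff {α ι γ δ : Type*} [Fintype α] [DecidableEq α] [LinearOrder γ]
    [Preorder δ] {g : γ → δ} (hg : StrictMono g) {V : α → ι → γ} {s : ℕ} :
    DominationCert (fun i j => g (V i j)) s ↔ DominationCert V s := by
  simp only [DominationCert, hg.lt_iff_lt]

lemma card_filter_fst_div_card {A B : Type*} [Fintype A] [Fintype B] [Nonempty B]
    (p : A → Prop) [DecidablePred p] :
    (#{x : A × B | p x.1} : ℝ) / Fintype.card (A × B) = #{a | p a} / Fintype.card A := by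
  rw [← univ_product_univ, filter_product_left, card_product, card_univ, Fintype.card_prod]
  push_cast
  exact mul_div_mul_right _ _ (by positivity)

lemma card_filter_snd_div_card {A B : Type*} [Fintype A] [Fintype B] [Nonempty A]
    (p : B → Prop) [DecidablePred p] :
    (#{x : A × B | p x.2} : ℝ) / Fintype.card (A × B) = #{b | p b} / Fintype.card B := by
  rw [← univ_product_univ, filter_product_right, card_product, card_univ, Fintype.card_prod]
  push_cast
  exact mul_div_mul_left _ _ (by positivity)

open Classical in
lemma card_dominationCert_div_card_le {ι α : Type*} [Fintype ι] [DecidableEq ι] [Fintype α]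
    [DecidableEq α] [LinearOrder α] (s : ℕ) :
    (#{f : ι → Perm α | DominationCert (fun i j => f j i) s} : ℝ) /
        Fintype.card (ι → Perm α) ≤
      2 ^ Fintype.card ι *
          (2 ^ Fintype.card α * (Fintype.card α : ℝ) ^ (Fintype.card α - s)) /
        (((Fintype.card α - s : ℕ) : ℝ) + 1) ^ s := by
  rw [div_le_div_iff₀ (by positivity) (by positivity), Fintype.card_fun]
  exact_mod_cast (card_dominationCert_mul_le (ι := ι) (α := α) s).trans_eq (by ring)

theorem probSolvable_le {m n s : ℕ} (hs : 2 ≤ s) (hm : s ≤ m) (hn : s ≤ n) :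
    probSolvable m n ≤ 2 ^ n * (2 ^ m * (m : ℝ) ^ (m - s)) / (((m - s : ℕ) : ℝ) + 1) ^ s +
      2 ^ m * (2 ^ n * (n : ℝ) ^ (n - s)) / (((n - s : ℕ) : ℝ) + 1) ^ s := by
  classical
  have hcast (k : ℕ) : StrictMono fun a : Fin k => ((a : ℕ) : ℝ) :=
    Nat.strictMono_cast.comp Fin.val_strictMono
  have hsub : ({ω : Omega m n | GameSolvable ω} : Finset _) ⊆
      ({ω : Omega m n | DominationCert (fun i j => ω.1 j i) s} : Finset _) ∪
        ({ω : Omega m n | DominationCert (fun i j => ω.2 j i) s} : Finset _) := by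
    intro ω hω
    simp only [mem_union, mem_filter, mem_univ, true_and] at hω ⊢
    exact (dominationCert_or_of_solvable hs hm hn hω).imp
      (dominationCert_comp_iff (hcast m)).mp (dominationCert_comp_iff (hcast n)).mp
  calc probSolvable m n
      ≤ ((#{ω : Omega m n | DominationCert (fun i j => ω.1 j i) s} +
          #{ω : Omega m n | DominationCert (fun i j => ω.2 j i) s} : ℕ) : ℝ) /
          Fintype.card (Omega m n) := by
        rw [probSolvable, Pr, Set.Finite.toFinset_ofPred]
        gcongr
        exact (card_le_card hsub).trans (card_union_le _ _)
    _ ≤ _ := by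
        rw [Nat.cast_add, add_div,
          card_filter_fst_div_card
            fun f : Fin n → Perm (Fin m) => DominationCert (fun i j => f j i) s,
          card_filter_snd_div_card
            fun f : Fin m → Perm (Fin n) => DominationCert (fun i j => f j i) s]
        exact add_le_add
          (by simpa using card_dominationCert_div_card_le (ι := Fin n) (α := Fin m) s)
          (by simpa using card_dominationCert_div_card_le (ι := Fin m) (α := Fin n) s)

end RandomGame

section Asymptotics

open Real

lemma log_two_mul_bound_le {n s : ℕ} {β : ℝ} (hsn : s ≤ n) (hs : β * n ≤ s)
    (h₁ : 1 ≤ (1 - β) * n) (hk : (1 - β) * n ≤ ((n - s : ℕ) : ℝ) + 1) :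
    log (2 * (2 ^ n * (2 ^ n * (n : ℝ) ^ (n - s)) / (((n - s : ℕ) : ℝ) + 1) ^ s)) ≤
      log 2 + n * (2 * log 2 - β * log (1 - β)) + (1 - 2 * β) * n * log n := by
  have hn : (1 : ℝ) ≤ n :=
    Nat.one_le_cast.mpr (Nat.pos_of_ne_zero fun h => by simp [h] at h₁; linarith)
  have h1β : 0 < 1 - β := by nlinarith
  have hk' : ((n - s : ℕ) : ℝ) ≤ (1 - β) * n := by rw [Nat.cast_sub hsn]; linarith
  have hlogn : 0 ≤ log n := log_nonneg hn
  have hlog : log ((1 - β) * n) = log (1 - β) + log n := log_mul h1β.ne' (by positivity)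
  rw [log_mul two_ne_zero (by positivity), log_div (by positivity) (by positivity),
    log_mul (by positivity) (by positivity), log_mul (by positivity) (by positivity), log_pow,
    log_pow, log_pow]
  have e₁ : ((n - s : ℕ) : ℝ) * log n ≤ (1 - β) * n * log n :=
    mul_le_mul_of_nonneg_right hk' hlogn
  have e₂ : β * n * log ((1 - β) * n) ≤ s * log (((n - s : ℕ) : ℝ) + 1) :=
    mul_le_mul hs (log_le_log (by positivity) hk) (log_nonneg h₁) (Nat.cast_nonneg s)
  rw [hlog] at e₂
  linarith

lemma eventually_exists_two_mul_bound_le {ε : ℝ} (hε : 0 < ε) (hε' : ε < 1 / 3) :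
    ∀ᶠ n : ℕ in atTop, ∃ s, 2 ≤ s ∧ s ≤ n ∧
      2 * (2 ^ n * (2 ^ n * (n : ℝ) ^ (n - s)) / (((n - s : ℕ) : ℝ) + 1) ^ s) ≤
        (n : ℝ) ^ (-(1 / 3 - ε) * n) := by
  -- `1 - 2 * β = -(1/3 - ε) - ε/2`; the spare `ε/2 * n * log n` absorbs the linear terms.
  set β : ℝ := 2 / 3 - ε / 4 with hβ
  set c : ℝ := 2 * log 2 - β * log (1 - β) with hc
  filter_upwards [eventually_ge_atTop 4,
    (tendsto_log_atTop.comp tendsto_natCast_atTop_atTop).eventually_ge_atTop (2 * (c + 1) / ε)]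
    with n hn₄ hlog
  have hn : (4 : ℝ) ≤ n := by exact_mod_cast hn₄
  replace hlog : c + 1 ≤ ε / 2 * log n := by
    have : 2 * (c + 1) / ε ≤ log n := hlog
    rw [div_le_iff₀ hε] at this
    linarith
  have hβ₀ : 7 / 12 < β := by linarith
  have hβ₁ : β ≤ 2 / 3 := by linarith
  set s := ⌈β * n⌉₊
  have hs : β * n ≤ s := Nat.le_ceil _
  have hs' : (s : ℝ) < β * n + 1 := Nat.ceil_lt_add_one (by nlinarith)
  have hsn : s ≤ n := Nat.ceil_le.mpr (by nlinarith)
  refine ⟨s, ?_, hsn, ?_⟩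
  · have : (1 : ℝ) < s := by nlinarith
    exact_mod_cast this
  rw [← log_le_log_iff (by positivity) (by positivity), log_rpow (by positivity)]
  refine (log_two_mul_bound_le hsn hs (by nlinarith) (by rw [Nat.cast_sub hsn]; linarith)).trans ?_
  rw [← hc, hβ]
  have hcn : (c + 1) * n ≤ ε / 2 * log n * n := mul_le_mul_of_nonneg_right hlog (by positivity)
  have hlog2 : log 2 ≤ 1 := by linarith [log_le_sub_one_of_pos (zero_lt_two' ℝ)]
  linarith

end Asymptotics

/-- For every `0 < ε < 1/3` there exists `N` such that for all `n ≥ N`,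
`π(n,n) ≤ n^(−(1/3−ε)·n)`. -/
theorem stmt16 (ε : ℝ) (hε : 0 < ε) (hε' : ε < 1 / 3) :
    ∃ N : ℕ, ∀ n : ℕ, N ≤ n →
      probSolvable n n ≤ (n : ℝ) ^ (-(1 / 3 - ε) * (n : ℝ)) := by
  obtain ⟨N, hN⟩ := eventually_atTop.mp (eventually_exists_two_mul_bound_le hε hε')
  refine ⟨N, fun n hn => ?_⟩
  obtain ⟨s, hs, hsn, hbound⟩ := hN n hn
  calc probSolvable n n ≤ _ := probSolvable_le hs hsn hsn
    _ = _ := by ring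
    _ ≤ _ := hbound
end

section
/- For all integers 1 ≤ m ≤ n, in a random game G(m,n) the probability that Row loses at least one action in iterated elimination satisfies Pr(S^R(m,n) < m) ≤ m(m−1)·(m/n)^{(m−1)/4}. Moreover, for every fixed m, Pr(S^R(m,n) < m) = O(n^{−(m−1)/2}) as n → ∞. -/
open Finset Filter

/-!
If Row loses an action, look at the first round in which this happens: up to that round all Row
actions are present, so every Column action undominated in the full game survives, and the
eliminated row `i` is beaten by some row `i'` on all of these columns. Given Column's payoffs,
Row's columns are independent and `i` beats `i'` in each with probability `1/2`, so this event has
probability `E[2^(-U)]`, `U` the number of undominated columns. A column is surely undominated if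
no other column beats it in row `0` and in some other row; after relabelling the columns by
decreasing payoff in row `0` this says that its label is a record of one of `m - 1` independent
uniform permutations. Record indicators are independent, position `k` being a record with
probability `1/k`, whence `E[2^(-U)] ≤ Φ = ∏_{k=1}^n (1 + (1 - 1/k)^(m-1))/2` and, summing over the
`m(m-1)` ordered pairs, `Pr(S^R < m) ≤ m(m-1)Φ`. Both bounds then follow from
`(1 + (1 - x)^r)/2 ≤ exp(-rx/2 + (rx)^2/4)` and the comparison of harmonic sums with logarithms.
-/

open Equiv

section Records

def IsRecord {N : ℕ} (σ : Perm (Fin N)) (k : Fin N) : Prop := ∀ l < k, σ l < σ k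

instance {N : ℕ} (σ : Perm (Fin N)) (k : Fin N) : Decidable (IsRecord σ k) :=
  inferInstanceAs (Decidable (∀ l < k, σ l < σ k))

/-- Extend `τ` by a new last position with value `v`, shifting the values `≥ v` up. -/
def insertLast {N : ℕ} (v : Fin (N + 1)) (τ : Perm (Fin N)) : Perm (Fin (N + 1)) :=
  ((finSuccEquiv' (Fin.last N)).trans (optionCongr τ)).trans (finSuccEquiv' v).symm

@[simp] lemma insertLast_last {N : ℕ} (v : Fin (N + 1)) (τ : Perm (Fin N)) :
    insertLast v τ (Fin.last N) = v := by
  simp [insertLast, finSuccEquiv'_at, finSuccEquiv'_symm_none]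

@[simp] lemma insertLast_castSucc {N : ℕ} (v : Fin (N + 1)) (τ : Perm (Fin N)) (k : Fin N) :
    insertLast v τ k.castSucc = v.succAbove (τ k) := by
  simp [insertLast, finSuccEquiv'_last_apply_castSucc, finSuccEquiv'_symm_some]

lemma insertLast_bijective (N : ℕ) :
    Function.Bijective fun p : Perm (Fin N) × Fin (N + 1) => insertLast p.2 p.1 := by
  refine (Fintype.bijective_iff_injective_and_card _).mpr ⟨?_, ?_⟩
  · rintro ⟨τ, v⟩ ⟨τ', v'⟩ h
    have hv : v = v' := by simpa using congrArg (· (Fin.last N)) h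
    subst hv
    have hτ : τ = τ' := Equiv.ext fun k =>
      Fin.succAbove_right_injective (p := v) (by simpa using congrArg (· k.castSucc) h)
    rw [hτ]
  · simp [Fintype.card_perm, Nat.factorial_succ, mul_comm]

lemma isRecord_insertLast_castSucc {N : ℕ} (v : Fin (N + 1)) (τ : Perm (Fin N)) (k : Fin N) :
    IsRecord (insertLast v τ) k.castSucc ↔ IsRecord τ k := by
  refine ⟨fun h l hl => ?_, fun h l hl => ?_⟩
  · simpa [Fin.succAbove_lt_succAbove_iff] using h l.castSucc (Fin.castSucc_lt_castSucc_iff.mpr hl)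
  · obtain ⟨l, rfl⟩ := Fin.exists_castSucc_eq.mpr (hl.trans (Fin.castSucc_lt_last k)).ne
    simpa [Fin.succAbove_lt_succAbove_iff] using h l (Fin.castSucc_lt_castSucc_iff.mp hl)

lemma isRecord_insertLast_last {N : ℕ} (v : Fin (N + 1)) (τ : Perm (Fin N)) :
    IsRecord (insertLast v τ) (Fin.last N) ↔ v = Fin.last N := by
  refine ⟨fun h => ?_, fun hv l hl => ?_⟩
  · by_contra hv
    obtain ⟨k, hk⟩ : ∃ k, v.succAbove k = Fin.last N := Fin.exists_succAbove_eq (Ne.symm hv)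
    have := h (τ.symm k).castSucc (Fin.castSucc_lt_last _)
    rw [insertLast_castSucc, apply_symm_apply, hk, insertLast_last] at this
    exact absurd this (not_lt.mpr (Fin.le_last v))
  · obtain ⟨l, rfl⟩ := Fin.exists_castSucc_eq.mpr hl.ne
    simp [hv, Fin.castSucc_lt_last]

/-- The record indicators of a uniform permutation are independent, position `k` being a
record with probability `1 / (k + 1)`. -/
lemma sum_prod_ite_isRecord {R : Type*} [CommSemiring R] (N : ℕ) (a b : Fin N → R) :
    ∑ σ : Perm (Fin N), ∏ k, (if IsRecord σ k then a k else b k) =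
      ∏ k : Fin N, (a k + k * b k) := by
  induction N with
  | zero => simp
  | succ N ih =>
    have hsplit (τ : Perm (Fin N)) (v : Fin (N + 1)) :
        ∏ k, (if IsRecord (insertLast v τ) k then a k else b k) =
          (∏ k : Fin N, if IsRecord τ k then a k.castSucc else b k.castSucc) *
            if v = Fin.last N then a (Fin.last N) else b (Fin.last N) := by
      simp only [Fin.prod_univ_castSucc, isRecord_insertLast_castSucc, isRecord_insertLast_last]
    have hlast : ∑ v : Fin (N + 1), (if v = Fin.last N then a (Fin.last N) else b (Fin.last N)) =
        a (Fin.last N) + N * b (Fin.last N) := by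
      simp [Fin.sum_univ_castSucc, Fin.castSucc_ne_last, add_comm]
    rw [← (insertLast_bijective N).sum_comp, Fintype.sum_prod_type]
    simp only [hsplit, ← Finset.mul_sum, hlast, ← Finset.sum_mul, ih,
      Fin.prod_univ_castSucc (n := N)]
    simp

end Records

section RecordCounts

lemma card_forall_not_isRecord {N : ℕ} (t : Finset (Fin N)) :
    #{σ : Perm (Fin N) | ∀ k ∈ t, ¬IsRecord σ k} =
      ∏ k : Fin N, if k ∈ t then (k : ℕ) else k + 1 := by
  have hind (σ : Perm (Fin N)) : (if ∀ k ∈ t, ¬IsRecord σ k then 1 else 0) =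
      ∏ k, if IsRecord σ k then (if k ∈ t then 0 else 1) else 1 := by
    by_cases h : ∀ k ∈ t, ¬IsRecord σ k
    · rw [if_pos h, prod_eq_one fun k _ => by grind]
    · obtain ⟨k, hk, hσ⟩ : ∃ k ∈ t, IsRecord σ k := by simpa using h
      rw [if_neg (by grind), prod_eq_zero (mem_univ k) (by simp [hk, hσ])]
  rw [card_filter, Finset.sum_congr rfl fun σ _ => hind σ, sum_prod_ite_isRecord]
  refine Finset.prod_congr rfl fun k _ => ?_
  split_ifs <;> simp [add_comm]

lemma sum_two_pow_card_forall_not_isRecord (r n : ℕ) :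
    ∑ τ : Fin r → Perm (Fin n), 2 ^ #{k | ∀ i, ¬IsRecord (τ i) k} =
      ∏ k : Fin n, ((k : ℕ) ^ r + ((k : ℕ) + 1) ^ r) := by
  set S : (Fin r → Perm (Fin n)) → Finset (Fin n) := fun τ => {k | ∀ i, ¬IsRecord (τ i) k}
  have hpi (t : Finset (Fin n)) : #{τ | t ⊆ S τ} = #(Fintype.piFinset fun _ : Fin r =>
      ({σ | ∀ k ∈ t, ¬IsRecord σ k} : Finset (Perm (Fin n)))) := by
    congr 1
    ext τ
    simp only [S, mem_filter, mem_univ, true_and, Fintype.mem_piFinset, subset_iff]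
    grind
  calc ∑ τ, 2 ^ #(S τ)
      = ∑ τ, ∑ t : Finset (Fin n), if t ⊆ S τ then 1 else 0 := by
        simp only [← card_powerset, sum_boole, Nat.cast_id]
        congr! 2 with τ
        ext t
        simp
    _ = ∑ t : Finset (Fin n), #{σ : Perm (Fin n) | ∀ k ∈ t, ¬IsRecord σ k} ^ r := by
        rw [sum_comm]
        simp [sum_boole, hpi, Fintype.card_piFinset]
    _ = ∑ t : Finset (Fin n), ∏ k : Fin n, if k ∈ t then (k : ℕ) ^ r else ((k : ℕ) + 1) ^ r := by
        simp only [card_forall_not_isRecord, ← Finset.prod_pow, apply_ite (· ^ r)]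
    _ = ∏ k : Fin n, ((k : ℕ) ^ r + ((k : ℕ) + 1) ^ r) := by
        rw [Fintype.prod_add]
        refine Finset.sum_congr rfl fun t _ => ?_
        simpa [Finset.piecewise, Finset.compl_eq_univ_sdiff] using
          Finset.prod_piecewise univ t (fun k : Fin n => (k : ℕ) ^ r) (fun k => ((k : ℕ) + 1) ^ r)

end RecordCounts

section TwoRowCertificate

variable {r n : ℕ}

/-- A sufficient condition for column `j` to be undominated whose probability can be computed
exactly through records. -/
def IsTwoRowUndominated (c : Fin (r + 1) → Perm (Fin n)) (j : Fin n) : Prop :=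
  ∃ i : Fin r, ∀ j', c 0 j < c 0 j' → c i.succ j' < c i.succ j

instance (c : Fin (r + 1) → Perm (Fin n)) (j : Fin n) : Decidable (IsTwoRowUndominated c j) :=
  inferInstanceAs (Decidable (∃ i : Fin r, ∀ j', c 0 j < c 0 j' → c i.succ j' < c i.succ j))

lemma IsTwoRowUndominated.not_dominated {c : Fin (r + 1) → Perm (Fin n)} {j : Fin n}
    (h : IsTwoRowUndominated c j) : ¬∃ j', ∀ i, c i j < c i j' := by
  rintro ⟨j', hj'⟩
  obtain ⟨i, hi⟩ := h
  exact (hi j' (hj' 0)).asymm (hj' i.succ)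

/-- `c₀.trans Fin.revPerm` relabels the columns by decreasing payoff in row `0`. -/
lemma isTwoRowUndominated_cons_mul_iff (c₀ : Perm (Fin n)) (τ : Fin r → Perm (Fin n))
    (j : Fin n) :
    IsTwoRowUndominated (Fin.cons c₀ fun i => τ i * c₀.trans Fin.revPerm) j ↔
      ∃ i, IsRecord (τ i) (c₀.trans Fin.revPerm j) := by
  set q := c₀.trans Fin.revPerm
  have hq (a b : Fin n) : c₀ a < c₀ b ↔ q b < q a := by simp [q, Fin.rev_lt_rev]
  refine exists_congr fun i => ?_
  simp only [IsRecord, Fin.cons_zero, Fin.cons_succ, Perm.mul_apply, hq]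
  exact (q.symm.forall_congr_left (p := fun l => l < q j → τ i l < τ i (q j))).symm

lemma sum_two_pow_card_not_isTwoRowUndominated (r n : ℕ) :
    ∑ c : Fin (r + 1) → Perm (Fin n), 2 ^ #{j | ¬IsTwoRowUndominated c j} =
      n.factorial * ∏ k : Fin n, ((k : ℕ) ^ r + ((k : ℕ) + 1) ^ r) := by
  have hrow (c₀ : Perm (Fin n)) :
      ∑ g : Fin r → Perm (Fin n), 2 ^ #{j | ¬IsTwoRowUndominated (Fin.cons c₀ g) j} =
        ∏ k : Fin n, ((k : ℕ) ^ r + ((k : ℕ) + 1) ^ r) := by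
    set q := c₀.trans Fin.revPerm
    rw [← sum_two_pow_card_forall_not_isRecord,
      ← (Equiv.piCongrRight fun _ : Fin r => Equiv.mulRight q).sum_comp]
    refine Finset.sum_congr rfl fun τ _ => congrArg (2 ^ ·) (card_equiv q fun j => ?_)
    simp only [mem_filter, mem_univ, true_and]
    exact (isTwoRowUndominated_cons_mul_iff c₀ τ j).not.trans not_exists
  rw [← (Fin.consEquiv fun _ => Perm (Fin n)).sum_comp, Fintype.sum_prod_type]
  exact (Finset.sum_congr rfl fun c₀ _ => hrow c₀).trans (by simp [Fintype.card_perm])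

end TwoRowCertificate

/-- `Φ(r + 1, n)`: the bound on the probability that one fixed row beats another on every
undominated column. -/
noncomputable def phi (r n : ℕ) : ℝ := ∏ k ∈ range n, (1 + (1 - ((k : ℝ) + 1)⁻¹) ^ r) / 2

lemma sum_half_pow_card_isTwoRowUndominated (r n : ℕ) :
    ∑ c : Fin (r + 1) → Perm (Fin n), (1 / 2 : ℝ) ^ #{j | IsTwoRowUndominated c j} =
      (n.factorial : ℝ) ^ (r + 1) * phi r n := by
  have hhalf (c : Fin (r + 1) → Perm (Fin n)) : (1 / 2 : ℝ) ^ #{j | IsTwoRowUndominated c j} =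
      (1 / 2) ^ n * 2 ^ #{j | ¬IsTwoRowUndominated c j} := by
    have hcard := card_filter_add_card_filter_not (s := univ) (IsTwoRowUndominated c)
    rw [card_univ, Fintype.card_fin] at hcard
    have hn : (1 / 2 : ℝ) ^ n = (1 / 2) ^ #{j | IsTwoRowUndominated c j} *
        (1 / 2) ^ #{j | ¬IsTwoRowUndominated c j} := by rw [← pow_add, hcard]
    rw [hn, mul_assoc, ← mul_pow]
    norm_num
  have hfactor (k : ℕ) : ((k : ℝ) ^ r + ((k : ℝ) + 1) ^ r) / 2 =
      ((k : ℝ) + 1) ^ r * ((1 + (1 - ((k : ℝ) + 1)⁻¹) ^ r) / 2) := by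
    rw [show 1 - ((k : ℝ) + 1)⁻¹ = k / (k + 1) by field_simp; ring, div_pow]
    field_simp
    ring
  have hfac : (n.factorial : ℝ) ^ r = ∏ k ∈ range n, ((k : ℝ) + 1) ^ r := by
    rw [← prod_range_add_one_eq_factorial]
    push_cast
    rw [prod_pow]
  simp only [hhalf, ← mul_sum]
  have := congrArg (Nat.cast (R := ℝ)) (sum_two_pow_card_not_isTwoRowUndominated r n)
  push_cast at this
  rw [this, Fin.prod_univ_eq_prod_range (fun k => (k : ℝ) ^ r + ((k : ℝ) + 1) ^ r), pow_succ',
    mul_assoc, hfac, phi, ← prod_mul_distrib]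
  simp only [← hfactor, prod_div_distrib, prod_const, card_range, one_div_pow]
  ring

section RandomGame

lemma card_omega (m n : ℕ) :
    (Fintype.card (Omega m n) : ℝ) = (m.factorial : ℝ) ^ n * (n.factorial : ℝ) ^ m := by
  simp [Fintype.card_perm]

lemma Pr_le_sum {m n : ℕ} {ι : Type*} (s : Finset ι) {E : Set (Omega m n)}
    (A : ι → Set (Omega m n)) (h : ∀ ω ∈ E, ∃ x ∈ s, ω ∈ A x) : Pr E ≤ ∑ x ∈ s, Pr (A x) := by
  simp only [Pr, ← sum_div]
  gcongr
  rw [← Nat.cast_sum, Nat.cast_le]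
  refine (card_le_card fun ω hω => ?_).trans card_biUnion_le
  obtain ⟨x, hx, hωx⟩ := h ω ((Set.Finite.mem_toFinset _).mp hω)
  exact mem_biUnion.mpr ⟨x, hx, (Set.Finite.mem_toFinset _).mpr hωx⟩

lemma two_mul_card_perm_apply_lt {α : Type*} [Fintype α] [DecidableEq α] [LinearOrder α]
    {i i' : α} (h : i ≠ i') : 2 * #{σ : Perm α | σ i < σ i'} = (Fintype.card α).factorial := by
  have hswap : #{σ : Perm α | σ i < σ i'} = #{σ : Perm α | ¬σ i < σ i'} := by
    refine card_bij' (fun σ _ => σ * swap i i') (fun σ _ => σ * swap i i') ?_ ?_ ?_ ?_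
    · intro σ hσ
      simpa [swap_apply_left, swap_apply_right] using (mem_filter.mp hσ).2.le
    · intro σ hσ
      have hne : σ i' ≠ σ i := σ.injective.ne h.symm
      simpa [swap_apply_left, swap_apply_right] using
        lt_of_le_of_ne (not_lt.mp (mem_filter.mp hσ).2) hne
    · intro σ _
      exact mul_swap_mul_self i i' σ
    · intro σ _
      exact mul_swap_mul_self i i' σ
  rw [two_mul]
  nth_rewrite 2 [hswap]
  rw [card_filter_add_card_filter_not, card_univ, Fintype.card_perm]

lemma card_forall_mem_apply_lt {m n : ℕ} (U : Finset (Fin n)) {i i' : Fin m} (h : i ≠ i') :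
    (#{a : Fin n → Perm (Fin m) | ∀ j ∈ U, a j i < a j i'} : ℝ) =
      (m.factorial : ℝ) ^ n * (1 / 2) ^ #U := by
  have hpi : ({a : Fin n → Perm (Fin m) | ∀ j ∈ U, a j i < a j i'} : Finset _) =
      Fintype.piFinset fun j =>
        if j ∈ U then ({σ | σ i < σ i'} : Finset (Perm (Fin m))) else univ := by
    ext a
    simp only [mem_filter, mem_univ, true_and, Fintype.mem_piFinset]
    refine forall_congr' fun j => ?_
    split_ifs <;> simp [*]
  have hhalf : (#{σ : Perm (Fin m) | σ i < σ i'} : ℝ) = m.factorial * (1 / 2) := by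
    have := congrArg (Nat.cast (R := ℝ)) (two_mul_card_perm_apply_lt h)
    push_cast at this
    rw [Fintype.card_fin] at this
    linarith
  rw [hpi, Fintype.card_piFinset, Nat.cast_prod]
  simp only [apply_ite card, apply_ite (Nat.cast (R := ℝ)), hhalf, card_univ, Fintype.card_perm,
    Fintype.card_fin]
  calc ∏ j : Fin n, (if j ∈ U then (m.factorial : ℝ) * (1 / 2) else m.factorial)
      = ∏ j : Fin n, (m.factorial : ℝ) * (if j ∈ U then 1 / 2 else 1) :=
        prod_congr rfl fun j _ => by split_ifs <;> simp
    _ = (m.factorial : ℝ) ^ n * (1 / 2) ^ #U := by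
        rw [prod_mul_distrib, prod_const, card_univ, Fintype.card_fin, Fintype.prod_ite_mem,
          prod_const]

lemma Pr_forall_mem_apply_lt {m n : ℕ} (U : (Fin m → Perm (Fin n)) → Finset (Fin n))
    {i i' : Fin m} (h : i ≠ i') :
    Pr {ω : Omega m n | ∀ j ∈ U ω.2, ω.1 j i < ω.1 j i'} =
      (∑ c, (1 / 2 : ℝ) ^ #(U c)) / (n.factorial : ℝ) ^ m := by
  have hcard : (#(Set.toFinite {ω : Omega m n | ∀ j ∈ U ω.2, ω.1 j i < ω.1 j i'}).toFinset : ℝ) =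
      ∑ c, (#{a : Fin n → Perm (Fin m) | ∀ j ∈ U c, a j i < a j i'} : ℝ) := by
    rw [Set.Finite.toFinset_ofPred, card_filter, Fintype.sum_prod_type, sum_comm]
    push_cast
    simp only [card_filter, Nat.cast_sum, Nat.cast_ite, Nat.cast_one, Nat.cast_zero]
  rw [Pr, hcard, card_omega]
  simp only [card_forall_mem_apply_lt _ h, ← mul_sum]
  field_simp

def undominatedCols {m n : ℕ} (c : Fin m → Perm (Fin n)) : Finset (Fin n) :=
  {j | ¬∃ j', ∀ i, c i j < c i j'}

lemma Pr_forall_undominatedCols_apply_lt_le {r n : ℕ} {i i' : Fin (r + 1)} (h : i ≠ i') :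
    Pr {ω : Omega (r + 1) n | ∀ j ∈ undominatedCols ω.2, ω.1 j i < ω.1 j i'} ≤ phi r n := by
  rw [Pr_forall_mem_apply_lt _ h, div_le_iff₀ (by positivity), mul_comm,
    ← sum_half_pow_card_isTwoRowUndominated]
  refine sum_le_sum fun c _ => pow_le_pow_of_le_one (by norm_num) (by norm_num) (card_le_card ?_)
  intro j
  simpa [undominatedCols] using IsTwoRowUndominated.not_dominated

end RandomGame

section Elimination

variable {m n : ℕ}

lemma ColDomIn.mono {C : Fin m → Fin n → ℝ} {X X' : Finset (Fin m)} {Y Y' : Finset (Fin n)}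
    {j : Fin n} (h : ColDomIn C X Y j) (hX : X' ⊆ X) (hY : Y ⊆ Y') : ColDomIn C X' Y' j := by
  obtain ⟨j', hj', hlt⟩ := h
  exact ⟨j', hY hj', fun i hi => hlt i (hX hi)⟩

lemma exists_not_colDomIn (C : Fin m → Fin n → ℝ) (i : Fin m) [Nonempty (Fin n)] :
    ∃ j, ¬ColDomIn C univ univ j := by
  obtain ⟨j, -, hmax⟩ := exists_max_image univ (C i) univ_nonempty
  exact ⟨j, fun ⟨j', _, hlt⟩ => not_lt.mpr (hmax j' (mem_univ _)) (hlt i (mem_univ i))⟩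

open scoped Classical in
lemma not_colDomIn_mem_iterate_elimStep (R C : Fin m → Fin n → ℝ) {s : ℕ}
    (hs : ((elimStep R C)^[s] (univ, univ)).1 = univ) {j : Fin n}
    (hj : ¬ColDomIn C univ univ j) : j ∈ ((elimStep R C)^[s] (univ, univ)).2 := by
  induction s with
  | zero => exact mem_univ j
  | succ s ih =>
    rw [Function.iterate_succ_apply'] at hs ⊢
    have hX : ((elimStep R C)^[s] (univ, univ)).1 = univ :=
      eq_univ_of_forall fun i => filter_subset _ _ (hs ▸ mem_univ i)
    refine mem_filter.mpr ⟨ih hX, fun hdom => hj (hdom.mono ?_ (subset_univ _))⟩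
    rw [hX]

lemma exists_lt_of_survivors_ne_univ [Nonempty (Fin n)] (R C : Fin m → Fin n → ℝ)
    (h : (survivors R C).1 ≠ univ) :
    ∃ i i', i ≠ i' ∧ ∀ j, ¬ColDomIn C univ univ j → R i j < R i' j := by
  suffices ∀ s, ((elimStep R C)^[s] (univ, univ)).1 ≠ univ →
      ∃ i i', i ≠ i' ∧ ∀ j, ¬ColDomIn C univ univ j → R i j < R i' j from this _ h
  intro s hs
  induction s with
  | zero => exact absurd rfl hs
  | succ s ih =>
    by_cases hX : ((elimStep R C)^[s] (univ, univ)).1 = univ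
    · rw [Function.iterate_succ_apply'] at hs
      obtain ⟨i, -, hi⟩ : ∃ i ∈ univ, RowDomIn R univ ((elimStep R C)^[s] (univ, univ)).2 i := by
        by_contra! hno
        exact hs (by simpa [elimStep, hX] using hno)
      obtain ⟨i', -, hlt⟩ := hi
      have hundom {j} (hj : ¬ColDomIn C univ univ j) := not_colDomIn_mem_iterate_elimStep R C hX hj
      obtain ⟨j₀, hj₀⟩ := exists_not_colDomIn C i
      exact ⟨i, i', fun hii' => (hlt j₀ (hundom hj₀)).ne (hii' ▸ rfl),
        fun j hj => hlt j (hundom hj)⟩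
    · exact ih hX

end Elimination

lemma Pr_SR_lt_le (r n : ℕ) (hn : 0 < n) :
    Pr {ω : Omega (r + 1) n | SR ω < r + 1} ≤ (r + 1) * r * phi r n := by
  have : Nonempty (Fin n) := ⟨⟨0, hn⟩⟩
  have hbad (ω : Omega (r + 1) n) (hω : SR ω < r + 1) : ∃ p ∈ (univ : Finset (Fin (r + 1))).offDiag,
      ω ∈ {ω : Omega (r + 1) n | ∀ j ∈ undominatedCols ω.2, ω.1 j p.1 < ω.1 j p.2} := by
    have hne : (survivors (RPay ω) (CPay ω)).1 ≠ univ := fun h => by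
      simp [SR, h] at hω
    obtain ⟨i, i', hii', hlt⟩ := exists_lt_of_survivors_ne_univ _ _ hne
    refine ⟨(i, i'), by simpa using hii', fun j hj => ?_⟩
    have := hlt j (by simpa [undominatedCols, ColDomIn, CPay] using hj)
    simpa [RPay] using this
  calc Pr {ω : Omega (r + 1) n | SR ω < r + 1}
      ≤ ∑ p ∈ (univ : Finset (Fin (r + 1))).offDiag,
          Pr {ω : Omega (r + 1) n | ∀ j ∈ undominatedCols ω.2, ω.1 j p.1 < ω.1 j p.2} :=
        Pr_le_sum _ _ hbad
    _ ≤ ∑ p ∈ (univ : Finset (Fin (r + 1))).offDiag, phi r n :=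
        sum_le_sum fun p hp => Pr_forall_undominatedCols_apply_lt_le (mem_offDiag.mp hp).2.2
    _ = (r + 1) * r * phi r n := by
        rw [sum_const, offDiag_card, card_univ, Fintype.card_fin, ← Nat.mul_sub_one,
          Nat.add_sub_cancel, nsmul_eq_mul]
        push_cast
        ring

section Estimates

open Real

lemma one_sub_pow_le {x : ℝ} (hx0 : 0 ≤ x) (hx1 : x ≤ 1) (r : ℕ) :
    (1 - x) ^ r ≤ 1 - r * x + (r * x) ^ 2 / 2 := by
  induction r with
  | zero => simp
  | succ r ih =>
    have hstep : (1 - x) ^ (r + 1) ≤ (1 - r * x + (r * x) ^ 2 / 2) * (1 - x) := by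
      rw [pow_succ]
      exact mul_le_mul_of_nonneg_right ih (by linarith)
    have hx3 : 0 ≤ (r : ℝ) ^ 2 * x ^ 3 := by positivity
    push_cast
    nlinarith [sq_nonneg x]

lemma half_one_add_one_sub_pow_le_exp {x : ℝ} (hx0 : 0 ≤ x) (hx1 : x ≤ 1) (r : ℕ) :
    (1 + (1 - x) ^ r) / 2 ≤ exp (-(r * x) / 2 + (r * x) ^ 2 / 4) := by
  linarith [one_sub_pow_le hx0 hx1 r, add_one_le_exp (-(r * x) / 2 + (r * x) ^ 2 / 4)]

lemma half_one_add_one_sub_pow_le_exp_of_mul_le_one {x : ℝ} (hx0 : 0 ≤ x) (hx1 : x ≤ 1) {r : ℕ}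
    (hrx : r * x ≤ 1) : (1 + (1 - x) ^ r) / 2 ≤ exp (-(r * x) / 4) := by
  have hsq : (r * x) ^ 2 ≤ r * x := by nlinarith [mul_nonneg (Nat.cast_nonneg (α := ℝ) r) hx0]
  linarith [one_sub_pow_le hx0 hx1 r, add_one_le_exp (-(r * x) / 4)]

lemma log_div_le_sum_inv {a b : ℕ} (hab : a ≤ b) :
    log ((b + 1) / (a + 1)) ≤ ∑ k ∈ Ico a b, ((k : ℝ) + 1)⁻¹ := by
  induction b, hab using Nat.le_induction with
  | base => simp
  | succ b hab ih =>
    have hsplit : log ((((b + 1 : ℕ) : ℝ) + 1) / (a + 1)) =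
        log ((b + 1) / (a + 1)) + log (((b : ℝ) + 2) / (b + 1)) := by
      rw [← log_mul (by positivity) (by positivity)]
      congr 1
      field_simp
      push_cast
      ring
    have hstep : log (((b : ℝ) + 2) / (b + 1)) ≤ ((b : ℝ) + 1)⁻¹ := by
      have := log_le_sub_one_of_pos (show (0 : ℝ) < (b + 2) / (b + 1) by positivity)
      rw [show ((b : ℝ) + 2) / (b + 1) - 1 = ((b : ℝ) + 1)⁻¹ by field_simp; ring] at this
      exact this
    rw [sum_Ico_succ_top hab, hsplit]
    linarith

lemma sum_range_inv_sq_le_two (n : ℕ) : ∑ k ∈ range n, ((k : ℝ) + 1)⁻¹ ^ 2 ≤ 2 := by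
  calc ∑ k ∈ range n, ((k : ℝ) + 1)⁻¹ ^ 2 = ∑ i ∈ Ioo 0 (n + 1), ((i : ℝ) ^ 2)⁻¹ := by
        rw [range_eq_Ico, ← Ico_add_one_left_eq_Ioo, ← sum_Ico_add' _ 0 n 1]
        simp [inv_pow]
    _ ≤ 2 := by simpa using sum_Ioo_inv_sq_le (α := ℝ) 0 (n + 1)

lemma inv_natCast_add_one_le_one (k : ℕ) : ((k : ℝ) + 1)⁻¹ ≤ 1 :=
  inv_le_one_of_one_le₀ (by linarith [k.cast_nonneg (α := ℝ)])

lemma phi_factor_nonneg (r k : ℕ) : 0 ≤ (1 + (1 - ((k : ℝ) + 1)⁻¹) ^ r) / 2 := by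
  have := pow_nonneg (sub_nonneg.mpr (inv_natCast_add_one_le_one k)) r
  positivity

lemma phi_factor_le_one (r k : ℕ) : (1 + (1 - ((k : ℝ) + 1)⁻¹) ^ r) / 2 ≤ 1 := by
  have h0 : 0 ≤ ((k : ℝ) + 1)⁻¹ := by positivity
  have h1 := inv_natCast_add_one_le_one k
  have : (1 - ((k : ℝ) + 1)⁻¹) ^ r ≤ 1 := pow_le_one₀ (by linarith) (by linarith)
  linarith

lemma phi_succ_le_exp {a n : ℕ} (han : a ≤ n) :
    phi (a + 1) n ≤ exp (-(((a : ℝ) + 1) / 4) * ∑ k ∈ Ico a n, ((k : ℝ) + 1)⁻¹) := by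
  calc phi (a + 1) n
      = (∏ k ∈ range a, (1 + (1 - ((k : ℝ) + 1)⁻¹) ^ (a + 1)) / 2) *
          ∏ k ∈ Ico a n, (1 + (1 - ((k : ℝ) + 1)⁻¹) ^ (a + 1)) / 2 :=
        (prod_range_mul_prod_Ico _ han).symm
    _ ≤ ∏ k ∈ Ico a n, (1 + (1 - ((k : ℝ) + 1)⁻¹) ^ (a + 1)) / 2 :=
        mul_le_of_le_one_left (prod_nonneg fun k _ => phi_factor_nonneg _ k)
          (prod_le_one (fun k _ => phi_factor_nonneg _ k) fun k _ => phi_factor_le_one _ k)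
    _ ≤ ∏ k ∈ Ico a n, exp (-(((a + 1 : ℕ) : ℝ) * ((k : ℝ) + 1)⁻¹) / 4) := by
        refine prod_le_prod (fun k _ => phi_factor_nonneg _ k) fun k hk => ?_
        refine half_one_add_one_sub_pow_le_exp_of_mul_le_one (by positivity)
          (inv_natCast_add_one_le_one k) ?_
        have : (a : ℝ) ≤ k := by exact_mod_cast (mem_Ico.mp hk).1
        rw [← div_eq_mul_inv, div_le_one (by positivity)]
        push_cast
        linarith
    _ = exp (-(((a : ℝ) + 1) / 4) * ∑ k ∈ Ico a n, ((k : ℝ) + 1)⁻¹) := by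
        rw [← exp_sum, mul_sum]
        push_cast
        congr 1
        exact sum_congr rfl fun k _ => by ring

lemma phi_le_rpow {r n : ℕ} (hrn : r < n) :
    phi r n ≤ (((r : ℝ) + 1) / n) ^ ((r : ℝ) / 4) := by
  rcases r with _ | a
  · simp [phi]
  have hn : (0 : ℝ) < n := by exact_mod_cast (by omega : 0 < n)
  have hsum := log_div_le_sum_inv (by omega : a ≤ n)
  push_cast at hsum ⊢
  calc phi (a + 1) n
      ≤ exp (-(((a : ℝ) + 1) / 4) * ∑ k ∈ Ico a n, ((k : ℝ) + 1)⁻¹) := phi_succ_le_exp (by omega)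
    _ ≤ exp (-(((a : ℝ) + 1) / 4) * log ((n + 1) / (a + 1))) :=
        exp_le_exp.mpr (mul_le_mul_of_nonpos_left hsum (by linarith [a.cast_nonneg (α := ℝ)]))
    _ = (((a : ℝ) + 1) / (n + 1)) ^ (((a : ℝ) + 1) / 4) := by
        rw [rpow_def_of_pos (by positivity), log_div (by positivity) (by positivity),
          log_div (by positivity) (by positivity)]
        ring_nf
    _ ≤ (((a : ℝ) + 1 + 1) / n) ^ (((a : ℝ) + 1) / 4) := by
        refine rpow_le_rpow (by positivity) ?_ (by positivity)
        rw [div_le_div_iff₀ (by positivity) hn]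
        have : (a : ℝ) + 1 < n := by exact_mod_cast hrn
        nlinarith

lemma phi_le_exp_mul_rpow (r : ℕ) {n : ℕ} (hn : 0 < n) :
    phi r n ≤ exp ((r : ℝ) ^ 2 / 2) * (n : ℝ) ^ (-((r : ℝ) / 2)) := by
  have hn' : (0 : ℝ) < n := by exact_mod_cast hn
  have hharm : log n ≤ ∑ k ∈ range n, ((k : ℝ) + 1)⁻¹ := by
    have := log_div_le_sum_inv (Nat.zero_le n)
    simp only [Nat.cast_zero, zero_add, div_one, ← range_eq_Ico] at this
    exact (log_le_log hn' (by linarith)).trans this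
  calc phi r n
      ≤ ∏ k ∈ range n, exp (-(r * ((k : ℝ) + 1)⁻¹) / 2 + (r * ((k : ℝ) + 1)⁻¹) ^ 2 / 4) :=
        prod_le_prod (fun k _ => phi_factor_nonneg r k)
          fun k _ =>
            half_one_add_one_sub_pow_le_exp (by positivity) (inv_natCast_add_one_le_one k) r
    _ = exp (-((r : ℝ) / 2) * ∑ k ∈ range n, ((k : ℝ) + 1)⁻¹ +
          (r : ℝ) ^ 2 / 4 * ∑ k ∈ range n, ((k : ℝ) + 1)⁻¹ ^ 2) := by
        rw [← exp_sum, mul_sum, mul_sum, ← sum_add_distrib]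
        congr 1
        exact sum_congr rfl fun k _ => by ring
    _ ≤ exp (-((r : ℝ) / 2) * log n + (r : ℝ) ^ 2 / 4 * 2) :=
        exp_le_exp.mpr (add_le_add
          (mul_le_mul_of_nonpos_left hharm (by linarith [r.cast_nonneg (α := ℝ)]))
          (mul_le_mul_of_nonneg_left (sum_range_inv_sq_le_two n) (by positivity)))
    _ = exp ((r : ℝ) ^ 2 / 2) * (n : ℝ) ^ (-((r : ℝ) / 2)) := by
        rw [rpow_def_of_pos hn', ← exp_add]
        ring_nf

end Estimates

/-- For all `1 ≤ m ≤ n`, `Pr(S^R(m,n) < m) ≤ m(m−1)·(m/n)^((m−1)/4)`;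
moreover, for every fixed `m`, `Pr(S^R(m,n) < m) = O(n^(−(m−1)/2))` as `n → ∞`. -/
theorem stmt18 :
    (∀ m n : ℕ, 1 ≤ m → m ≤ n →
      Pr {ω : Omega m n | SR ω < m}
        ≤ (m : ℝ) * ((m : ℝ) - 1) * ((m : ℝ) / (n : ℝ)) ^ (((m : ℝ) - 1) / 4)) ∧
    ∀ m : ℕ, 1 ≤ m → ∃ C : ℝ, 0 < C ∧ ∀ n : ℕ, m ≤ n →
      Pr {ω : Omega m n | SR ω < m} ≤ C * (n : ℝ) ^ (-(((m : ℝ) - 1) / 2)) := by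
  refine ⟨fun m n hm hmn => ?_, fun m hm => ?_⟩
  · obtain ⟨r, rfl⟩ := Nat.exists_eq_add_of_le' hm
    calc Pr {ω : Omega (r + 1) n | SR ω < r + 1}
        ≤ (r + 1) * r * phi r n := Pr_SR_lt_le r n (by omega)
      _ ≤ (r + 1) * r * (((r : ℝ) + 1) / n) ^ ((r : ℝ) / 4) := by
        gcongr
        exact phi_le_rpow (by omega)
      _ = _ := by push_cast; ring_nf
  · obtain ⟨r, rfl⟩ := Nat.exists_eq_add_of_le' hm
    refine ⟨(r + 1) * (r + 1) * Real.exp ((r : ℝ) ^ 2 / 2), by positivity, fun n hn => ?_⟩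
    calc Pr {ω : Omega (r + 1) n | SR ω < r + 1}
        ≤ (r + 1) * r * phi r n := Pr_SR_lt_le r n (by omega)
      _ ≤ (r + 1) * (r + 1) * (Real.exp ((r : ℝ) ^ 2 / 2) * (n : ℝ) ^ (-((r : ℝ) / 2))) :=
        mul_le_mul (by gcongr; linarith) (phi_le_exp_mul_rpow r (by omega))
          (prod_nonneg fun k _ => phi_factor_nonneg r k) (by positivity)
      _ = _ := by push_cast; ring_nf
end

section
/- Let G be an m×n two-player game (m, n ≥ 1) whose Row payoffs are pairwise distinct within each column and whose Column payoffs are pairwise distinct within each row. If G is strict-dominance solvable, then for every m' ∈ {1,…,m} and every n' ∈ {1,…,n} there exist a subset of m' Row actions and a subset of n' Column actions such that the restricted m'×n' subgame (with payoffs inherited from G) is strict-dominance solvable. -/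
open Finset Filter

section StrictDomProofs

variable {m n : ℕ} {R C : Fin m → Fin n → ℝ}

lemma mem_elim_fst {p : Finset (Fin m) × Finset (Fin n)} {i : Fin m} :
    i ∈ (elimStep R C p).1 ↔ i ∈ p.1 ∧ ¬ RowDomIn R p.1 p.2 i := by
  classical
  simp [elimStep]

lemma mem_elim_snd {p : Finset (Fin m) × Finset (Fin n)} {j : Fin n} :
    j ∈ (elimStep R C p).2 ↔ j ∈ p.2 ∧ ¬ ColDomIn C p.1 p.2 j := by
  classical
  simp [elimStep]

lemma elim_fst_sub (p : Finset (Fin m) × Finset (Fin n)) :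
    (elimStep R C p).1 ⊆ p.1 := fun _ h => (mem_elim_fst.mp h).1

lemma elim_snd_sub (p : Finset (Fin m) × Finset (Fin n)) :
    (elimStep R C p).2 ⊆ p.2 := fun _ h => (mem_elim_snd.mp h).1

lemma rowdom_mono {X : Finset (Fin m)} {Y Y' : Finset (Fin n)} (hY : Y' ⊆ Y)
    {i : Fin m} (h : RowDomIn R X Y i) : RowDomIn R X Y' i := by
  obtain ⟨i', hi', hd⟩ := h
  exact ⟨i', hi', fun j hj => hd j (hY hj)⟩

lemma coldom_mono {X X' : Finset (Fin m)} {Y : Finset (Fin n)} (hX : X' ⊆ X)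
    {j : Fin n} (h : ColDomIn C X Y j) : ColDomIn C X' Y j := by
  obtain ⟨j', hj', hd⟩ := h
  exact ⟨j', hj', fun i hi => hd i (hX hi)⟩

lemma exists_undom_row {X : Finset (Fin m)} {Y : Finset (Fin n)} (hY : Y.Nonempty)
    {i : Fin m} (h : RowDomIn R X Y i) :
    ∃ w ∈ X, ¬ RowDomIn R X Y w ∧ ∀ j ∈ Y, R i j < R w j := by
  classical
  obtain ⟨j0, hj0⟩ := hY
  obtain ⟨i', hi', hd⟩ := h
  have hne : (X.filter fun w => ∀ j ∈ Y, R i j < R w j).Nonempty :=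
    ⟨i', Finset.mem_filter.mpr ⟨hi', hd⟩⟩
  obtain ⟨w, hw, hmax⟩ := Finset.exists_max_image _ (fun w => R w j0) hne
  rw [Finset.mem_filter] at hw
  refine ⟨w, hw.1, ?_, hw.2⟩
  rintro ⟨v, hvX, hvd⟩
  have hv : v ∈ X.filter fun w => ∀ j ∈ Y, R i j < R w j :=
    Finset.mem_filter.mpr ⟨hvX, fun j hj => (hw.2 j hj).trans (hvd j hj)⟩
  exact absurd (hmax v hv) (not_le.mpr (hvd j0 hj0))

lemma exists_undom_col {X : Finset (Fin m)} {Y : Finset (Fin n)} (hX : X.Nonempty)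
    {j : Fin n} (h : ColDomIn C X Y j) :
    ∃ w ∈ Y, ¬ ColDomIn C X Y w ∧ ∀ i ∈ X, C i j < C i w := by
  classical
  obtain ⟨i0, hi0⟩ := hX
  obtain ⟨j', hj', hd⟩ := h
  have hne : (Y.filter fun w => ∀ i ∈ X, C i j < C i w).Nonempty :=
    ⟨j', Finset.mem_filter.mpr ⟨hj', hd⟩⟩
  obtain ⟨w, hw, hmax⟩ := Finset.exists_max_image _ (fun w => C i0 w) hne
  rw [Finset.mem_filter] at hw
  refine ⟨w, hw.1, ?_, hw.2⟩
  rintro ⟨v, hvY, hvd⟩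
  have hv : v ∈ Y.filter fun w => ∀ i ∈ X, C i j < C i w :=
    Finset.mem_filter.mpr ⟨hvY, fun i hi => (hw.2 i hi).trans (hvd i hi)⟩
  exact absurd (hmax v hv) (not_le.mpr (hvd i0 hi0))

lemma elim_ne {p : Finset (Fin m) × Finset (Fin n)}
    (h1 : p.1.Nonempty) (h2 : p.2.Nonempty) :
    (elimStep R C p).1.Nonempty ∧ (elimStep R C p).2.Nonempty := by
  constructor
  · obtain ⟨j0, hj0⟩ := h2
    obtain ⟨w, hw, hmax⟩ := Finset.exists_max_image p.1 (fun i => R i j0) h1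
    refine ⟨w, mem_elim_fst.mpr ⟨hw, ?_⟩⟩
    rintro ⟨v, hv, hvd⟩
    exact absurd (hmax v hv) (not_le.mpr (hvd j0 hj0))
  · obtain ⟨i0, hi0⟩ := h1
    obtain ⟨w, hw, hmax⟩ := Finset.exists_max_image p.2 (fun j => C i0 j) h2
    refine ⟨w, mem_elim_snd.mpr ⟨hw, ?_⟩⟩
    rintro ⟨v, hv, hvd⟩
    exact absurd (hmax v hv) (not_le.mpr (hvd i0 hi0))

/-- `q` is obtained from `p` by deleting some strictly dominated actions
(keeping both sides nonempty). -/
def Red (R C : Fin m → Fin n → ℝ) (p q : Finset (Fin m) × Finset (Fin n)) : Prop :=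
  q.1 ⊆ p.1 ∧ q.2 ⊆ p.2 ∧ q.1.Nonempty ∧ q.2.Nonempty ∧
    (∀ i ∈ p.1, i ∉ q.1 → RowDomIn R p.1 p.2 i) ∧
    (∀ j ∈ p.2, j ∉ q.2 → ColDomIn C p.1 p.2 j)

lemma hered_row {p q : Finset (Fin m) × Finset (Fin n)} (h : Red R C p q)
    {i : Fin m} (hiq : i ∈ q.1) (hdom : RowDomIn R p.1 p.2 i) :
    RowDomIn R q.1 q.2 i := by
  obtain ⟨hq1, hq2, hne1, hne2, hrow, hcol⟩ := h
  have h1 : RowDomIn R p.1 q.2 i := rowdom_mono hq2 hdom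
  obtain ⟨w, hwX, hwund, hwd⟩ := exists_undom_row hne2 h1
  have hwq : w ∈ q.1 := by
    by_contra hwn
    exact hwund (rowdom_mono hq2 (hrow w hwX hwn))
  exact ⟨w, hwq, hwd⟩

lemma hered_col {p q : Finset (Fin m) × Finset (Fin n)} (h : Red R C p q)
    {j : Fin n} (hjq : j ∈ q.2) (hdom : ColDomIn C p.1 p.2 j) :
    ColDomIn C q.1 q.2 j := by
  obtain ⟨hq1, hq2, hne1, hne2, hrow, hcol⟩ := h
  have h1 : ColDomIn C q.1 p.2 j := coldom_mono hq1 hdom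
  obtain ⟨w, hwY, hwund, hwd⟩ := exists_undom_col hne1 h1
  have hwq : w ∈ q.2 := by
    by_contra hwn
    exact hwund (coldom_mono hq1 (hcol w hwY hwn))
  exact ⟨w, hwq, hwd⟩

lemma red_step {p q : Finset (Fin m) × Finset (Fin n)} (h : Red R C p q) :
    Red R C (elimStep R C p) (elimStep R C q) := by
  obtain ⟨hq1, hq2, hne1, hne2, hrow, hcol⟩ := h
  have hp1 : p.1.Nonempty := hne1.mono hq1
  have hp2 : p.2.Nonempty := hne2.mono hq2
  have hE1 : (elimStep R C p).1 ⊆ q.1 := by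
    intro x hx
    rw [mem_elim_fst] at hx
    by_contra hc
    exact hx.2 (hrow x hx.1 hc)
  have hE2 : (elimStep R C p).2 ⊆ q.2 := by
    intro y hy
    rw [mem_elim_snd] at hy
    by_contra hc
    exact hy.2 (hcol y hy.1 hc)
  have hEp := elim_ne (R := R) (C := C) hp1 hp2
  have hEq := elim_ne (R := R) (C := C) hne1 hne2
  refine ⟨?_, ?_, hEq.1, hEq.2, ?_, ?_⟩
  · intro x hx
    rw [mem_elim_fst] at hx ⊢
    exact ⟨hq1 hx.1, fun hd => hx.2 (hered_row ⟨hq1, hq2, hne1, hne2, hrow, hcol⟩ hx.1 hd)⟩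
  · intro y hy
    rw [mem_elim_snd] at hy ⊢
    exact ⟨hq2 hy.1, fun hd => hy.2 (hered_col ⟨hq1, hq2, hne1, hne2, hrow, hcol⟩ hy.1 hd)⟩
  · -- a row surviving simultaneous elimination in p but dominated once q's deletions
    -- are taken into account is dominated in `elimStep R C p`
    intro x hxEp hxnEq
    rw [mem_elim_fst] at hxEp
    have hxq : x ∈ q.1 := by
      by_contra hc
      exact hxEp.2 (hrow x hxEp.1 hc)
    have hxdq : RowDomIn R q.1 q.2 x := by
      by_contra hc
      exact hxnEq (mem_elim_fst.mpr ⟨hxq, hc⟩)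
    have hd1 : RowDomIn R q.1 (elimStep R C p).2 x := rowdom_mono hE2 hxdq
    obtain ⟨w, hwq, hwund, hwd⟩ := exists_undom_row hEp.2 hd1
    have hwundp : ¬ RowDomIn R p.1 p.2 w := by
      intro hwdp
      have hwdp1 : RowDomIn R p.1 (elimStep R C p).2 w :=
        rowdom_mono (elim_snd_sub p) hwdp
      obtain ⟨u, huX, huund, hud⟩ := exists_undom_row hEp.2 hwdp1
      have huq : u ∈ q.1 := by
        by_contra hc
        exact huund (rowdom_mono (elim_snd_sub p) (hrow u huX hc))
      exact hwund ⟨u, huq, hud⟩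
    exact ⟨w, mem_elim_fst.mpr ⟨hq1 hwq, hwundp⟩, hwd⟩
  · intro y hyEp hynEq
    rw [mem_elim_snd] at hyEp
    have hyq : y ∈ q.2 := by
      by_contra hc
      exact hyEp.2 (hcol y hyEp.1 hc)
    have hydq : ColDomIn C q.1 q.2 y := by
      by_contra hc
      exact hynEq (mem_elim_snd.mpr ⟨hyq, hc⟩)
    have hd1 : ColDomIn C (elimStep R C p).1 q.2 y := coldom_mono hE1 hydq
    obtain ⟨w, hwq, hwund, hwd⟩ := exists_undom_col hEp.1 hd1
    have hwundp : ¬ ColDomIn C p.1 p.2 w := by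
      intro hwdp
      have hwdp1 : ColDomIn C (elimStep R C p).1 p.2 w :=
        coldom_mono (elim_fst_sub p) hwdp
      obtain ⟨u, huY, huund, hud⟩ := exists_undom_col hEp.1 hwdp1
      have huq : u ∈ q.2 := by
        by_contra hc
        exact huund (coldom_mono (elim_fst_sub p) (hcol u huY hc))
      exact hwund ⟨u, huq, hud⟩
    exact ⟨w, mem_elim_snd.mpr ⟨hq2 hwq, hwundp⟩, hwd⟩

lemma iter_sub (p : Finset (Fin m) × Finset (Fin n)) (k : ℕ) :
    ((elimStep R C)^[k] p).1 ⊆ p.1 ∧ ((elimStep R C)^[k] p).2 ⊆ p.2 := by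
  induction k with
  | zero => simp
  | succ k ih =>
    rw [Function.iterate_succ_apply']
    exact ⟨(elim_fst_sub _).trans ih.1, (elim_snd_sub _).trans ih.2⟩

lemma iter_ne {p : Finset (Fin m) × Finset (Fin n)}
    (h1 : p.1.Nonempty) (h2 : p.2.Nonempty) (k : ℕ) :
    ((elimStep R C)^[k] p).1.Nonempty ∧ ((elimStep R C)^[k] p).2.Nonempty := by
  induction k with
  | zero => exact ⟨h1, h2⟩
  | succ k ih =>
    rw [Function.iterate_succ_apply']
    exact elim_ne ih.1 ih.2

lemma card_lt_of_ne {p : Finset (Fin m) × Finset (Fin n)} (h : elimStep R C p ≠ p) :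
    (elimStep R C p).1.card + (elimStep R C p).2.card < p.1.card + p.2.card := by
  have h1 := elim_fst_sub (R := R) (C := C) p
  have h2 := elim_snd_sub (R := R) (C := C) p
  have l1 := Finset.card_le_card h1
  have l2 := Finset.card_le_card h2
  by_contra hc
  push_neg at hc
  have e1 : p.1.card ≤ (elimStep R C p).1.card := by omega
  have e2 : p.2.card ≤ (elimStep R C p).2.card := by omega
  exact h (Prod.ext (Finset.eq_of_subset_of_card_le h1 e1)
    (Finset.eq_of_subset_of_card_le h2 e2))

lemma survivors_fixed {p : Finset (Fin m) × Finset (Fin n)}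
    (h1 : p.1.Nonempty) (h2 : p.2.Nonempty) :
    elimStep R C (survivorsFrom R C p) = survivorsFrom R C p := by
  have key : ∃ l, l ≤ m + n ∧
      elimStep R C ((elimStep R C)^[l] p) = (elimStep R C)^[l] p := by
    by_contra hc
    push_neg at hc
    have aux : ∀ k, k ≤ m + n →
        ((elimStep R C)^[k] p).1.card + ((elimStep R C)^[k] p).2.card + k ≤ m + n := by
      intro k
      induction k with
      | zero =>
        intro _
        have a1 : p.1.card ≤ m := by simpa using Finset.card_le_univ p.1
        have a2 : p.2.card ≤ n := by simpa using Finset.card_le_univ p.2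
        simpa using by omega
      | succ k ih =>
        intro hk
        have hk' : k ≤ m + n := by omega
        have hlt := card_lt_of_ne (hc k hk')
        have := ih hk'
        rw [Function.iterate_succ_apply']
        omega
    have h := aux (m + n) le_rfl
    have hne := iter_ne (R := R) (C := C) h1 h2 (m + n)
    have c1 : 1 ≤ ((elimStep R C)^[m + n] p).1.card := Finset.card_pos.mpr hne.1
    have c2 : 1 ≤ ((elimStep R C)^[m + n] p).2.card := Finset.card_pos.mpr hne.2
    omega
  obtain ⟨l, hl, hfix⟩ := key
  have stab : ∀ j, (elimStep R C)^[l + j] p = (elimStep R C)^[l] p := by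
    intro j
    induction j with
    | zero => rfl
    | succ j ih =>
      rw [← Nat.add_assoc, Function.iterate_succ_apply', ih, hfix]
  have hmn : (elimStep R C)^[m + n] p = (elimStep R C)^[l] p := by
    have := stab (m + n - l)
    rwa [Nat.add_sub_cancel' hl] at this
  show elimStep R C ((elimStep R C)^[m + n] p) = (elimStep R C)^[m + n] p
  rw [hmn, hfix]

lemma fixed_no_dom {p : Finset (Fin m) × Finset (Fin n)} (h : elimStep R C p = p) :
    (∀ i ∈ p.1, ¬ RowDomIn R p.1 p.2 i) ∧ (∀ j ∈ p.2, ¬ ColDomIn C p.1 p.2 j) := by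
  constructor
  · intro i hi hd
    have hi' : i ∈ (elimStep R C p).1 := by rw [h]; exact hi
    exact (mem_elim_fst.mp hi').2 hd
  · intro j hj hd
    have hj' : j ∈ (elimStep R C p).2 := by rw [h]; exact hj
    exact (mem_elim_snd.mp hj').2 hd

lemma red_survivors {p q : Finset (Fin m) × Finset (Fin n)} (h : Red R C p q) :
    survivorsFrom R C p = survivorsFrom R C q := by
  have hiter : ∀ k, Red R C ((elimStep R C)^[k] p) ((elimStep R C)^[k] q) := by
    intro k
    induction k with
    | zero => exact h
    | succ k ih =>
      rw [Function.iterate_succ_apply', Function.iterate_succ_apply']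
      exact red_step ih
  obtain ⟨hs1, hs2, hne1, hne2, hrow, hcol⟩ := hiter (m + n)
  have hp1 : p.1.Nonempty := h.2.2.1.mono h.1
  have hp2 : p.2.Nonempty := h.2.2.2.1.mono h.2.1
  have hfix : elimStep R C ((elimStep R C)^[m + n] p) = (elimStep R C)^[m + n] p :=
    survivors_fixed hp1 hp2
  have hnd := fixed_no_dom hfix
  show (elimStep R C)^[m + n] p = (elimStep R C)^[m + n] q
  apply Prod.ext
  · apply Finset.Subset.antisymm _ hs1
    intro x hx
    by_contra hc
    exact hnd.1 x hx (hrow x hx hc)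
  · apply Finset.Subset.antisymm _ hs2
    intro y hy
    by_contra hc
    exact hnd.2 y hy (hcol y hy hc)

lemma solvable_ne {p : Finset (Fin m) × Finset (Fin n)} (h : SolvableFrom R C p) :
    p.1.Nonempty ∧ p.2.Nonempty := by
  have hsub := iter_sub (R := R) (C := C) p (m + n)
  have c1 : (survivorsFrom R C p).1.Nonempty := Finset.card_pos.mp (by rw [h.1]; omega)
  have c2 : (survivorsFrom R C p).2.Nonempty := Finset.card_pos.mp (by rw [h.2]; omega)
  exact ⟨c1.mono hsub.1, c2.mono hsub.2⟩

lemma main_lemma (R C : Fin m → Fin n → ℝ) :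
    ∀ N (X : Finset (Fin m)) (Y : Finset (Fin n)),
    X.card + Y.card ≤ N → SolvableFrom R C (X, Y) →
    ∀ m' n', 1 ≤ m' → m' ≤ X.card → 1 ≤ n' → n' ≤ Y.card →
      ∃ X' Y', X' ⊆ X ∧ Y' ⊆ Y ∧ X'.card = m' ∧ Y'.card = n' ∧
        SolvableFrom R C (X', Y') := by
  intro N
  induction N with
  | zero =>
    intro X Y hN hs m' n' hm1 hm2 hn1 hn2
    omega
  | succ N ih =>
    intro X Y hN hs m' n' hm1 hm2 hn1 hn2
    by_cases hcase : m' = X.card ∧ n' = Y.card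
    · exact ⟨X, Y, Finset.Subset.refl X, Finset.Subset.refl Y,
        hcase.1.symm, hcase.2.symm, hs⟩
    have hXne : X.Nonempty := (solvable_ne hs).1
    have hYne : Y.Nonempty := (solvable_ne hs).2
    have hstep : elimStep R C (X, Y) ≠ (X, Y) := by
      intro heq
      have hsurv : survivorsFrom R C (X, Y) = (X, Y) := by
        show (elimStep R C)^[m + n] (X, Y) = (X, Y)
        exact Function.iterate_fixed heq (m + n)
      have e1 : X.card = 1 := by
        have := hs.1
        rw [hsurv] at this
        exact this
      have e2 : Y.card = 1 := by
        have := hs.2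
        rw [hsurv] at this
        exact this
      exact hcase ⟨by omega, by omega⟩
    by_cases hrd : ∃ i ∈ X, RowDomIn R X Y i
    · -- some row is strictly dominated
      obtain ⟨i, hiX, hidom⟩ := hrd
      obtain ⟨i', hi'X, hi'd⟩ := hidom
      have hii' : i ≠ i' := by
        rintro rfl
        obtain ⟨j0, hj0⟩ := hYne
        exact lt_irrefl _ (hi'd j0 hj0)
      have hi'e : i' ∈ X.erase i := Finset.mem_erase.mpr ⟨hii'.symm, hi'X⟩
      have hred : Red R C (X, Y) (X.erase i, Y) := by
        refine ⟨Finset.erase_subset _ _, Finset.Subset.refl _, ⟨i', hi'e⟩, hYne, ?_, ?_⟩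
        · intro x hxX hxn
          have hx : x = i := by
            by_contra hne
            exact hxn (Finset.mem_erase.mpr ⟨hne, hxX⟩)
          subst hx
          exact ⟨i', hi'X, hi'd⟩
        · intro j hj hjn
          exact absurd hj hjn
      have hsq : SolvableFrom R C (X.erase i, Y) := by
        unfold SolvableFrom at hs ⊢
        rw [← red_survivors hred]
        exact hs
      have hce : (X.erase i).card = X.card - 1 := Finset.card_erase_of_mem hiX
      have hX2 : 2 ≤ X.card := Finset.one_lt_card.mpr ⟨i, hiX, i', hi'X, hii'⟩
      by_cases hm : m' ≤ X.card - 1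
      · obtain ⟨X', Y', hX', hY', hc1, hc2, hsol⟩ :=
          ih (X.erase i) Y (by omega) hsq m' n' hm1 (by omega) hn1 hn2
        exact ⟨X', Y', hX'.trans (Finset.erase_subset _ _), hY', hc1, hc2, hsol⟩
      · have hm'eq : m' = X.card := by omega
        obtain ⟨X', Y', hX', hY', hc1, hc2, hsol⟩ :=
          ih (X.erase i) Y (by omega) hsq (X.card - 1) n' (by omega) (by omega) hn1 hn2
        have hXeq : X' = X.erase i :=
          Finset.eq_of_subset_of_card_le hX' (by omega)
        subst hXeq
        have hY'ne : Y'.Nonempty := Finset.card_pos.mp (by omega)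
        have hred2 : Red R C (X, Y') (X.erase i, Y') := by
          refine ⟨Finset.erase_subset _ _, Finset.Subset.refl _, ⟨i', hi'e⟩, hY'ne, ?_, ?_⟩
          · intro x hxX hxn
            have hx : x = i := by
              by_contra hne
              exact hxn (Finset.mem_erase.mpr ⟨hne, hxX⟩)
            subst hx
            exact ⟨i', hi'X, fun j hj => hi'd j (hY' hj)⟩
          · intro j hj hjn
            exact absurd hj hjn
        have hsol2 : SolvableFrom R C (X, Y') := by
          unfold SolvableFrom at hsol ⊢
          rw [red_survivors hred2]
          exact hsol
        exact ⟨X, Y', Finset.Subset.refl X, hY', hm'eq.symm, hc2, hsol2⟩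
    by_cases hcd : ∃ j ∈ Y, ColDomIn C X Y j
    · -- some column is strictly dominated
      obtain ⟨j, hjY, hjdom⟩ := hcd
      obtain ⟨j', hj'Y, hj'd⟩ := hjdom
      have hjj' : j ≠ j' := by
        rintro rfl
        obtain ⟨i0, hi0⟩ := hXne
        exact lt_irrefl _ (hj'd i0 hi0)
      have hj'e : j' ∈ Y.erase j := Finset.mem_erase.mpr ⟨hjj'.symm, hj'Y⟩
      have hred : Red R C (X, Y) (X, Y.erase j) := by
        refine ⟨Finset.Subset.refl _, Finset.erase_subset _ _, hXne, ⟨j', hj'e⟩, ?_, ?_⟩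
        · intro i hi hin
          exact absurd hi hin
        · intro y hyY hyn
          have hy : y = j := by
            by_contra hne
            exact hyn (Finset.mem_erase.mpr ⟨hne, hyY⟩)
          subst hy
          exact ⟨j', hj'Y, hj'd⟩
      have hsq : SolvableFrom R C (X, Y.erase j) := by
        unfold SolvableFrom at hs ⊢
        rw [← red_survivors hred]
        exact hs
      have hce : (Y.erase j).card = Y.card - 1 := Finset.card_erase_of_mem hjY
      have hY2 : 2 ≤ Y.card := Finset.one_lt_card.mpr ⟨j, hjY, j', hj'Y, hjj'⟩
      by_cases hn' : n' ≤ Y.card - 1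
      · obtain ⟨X', Y', hX', hY', hc1, hc2, hsol⟩ :=
          ih X (Y.erase j) (by omega) hsq m' n' hm1 hm2 hn1 (by omega)
        exact ⟨X', Y', hX', hY'.trans (Finset.erase_subset _ _), hc1, hc2, hsol⟩
      · have hn'eq : n' = Y.card := by omega
        obtain ⟨X', Y', hX', hY', hc1, hc2, hsol⟩ :=
          ih X (Y.erase j) (by omega) hsq m' (Y.card - 1) hm1 hm2 (by omega) (by omega)
        have hYeq : Y' = Y.erase j :=
          Finset.eq_of_subset_of_card_le hY' (by omega)
        subst hYeq
        have hX'ne : X'.Nonempty := Finset.card_pos.mp (by omega)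
        have hred2 : Red R C (X', Y) (X', Y.erase j) := by
          refine ⟨Finset.Subset.refl _, Finset.erase_subset _ _, hX'ne, ⟨j', hj'e⟩, ?_, ?_⟩
          · intro i hi hin
            exact absurd hi hin
          · intro y hyY hyn
            have hy : y = j := by
              by_contra hne
              exact hyn (Finset.mem_erase.mpr ⟨hne, hyY⟩)
            subst hy
            exact ⟨j', hj'Y, fun i hi => hj'd i (hX' hi)⟩
        have hsol2 : SolvableFrom R C (X', Y) := by
          unfold SolvableFrom at hsol ⊢
          rw [red_survivors hred2]
          exact hsol
        exact ⟨X', Y, hX', Finset.Subset.refl Y, hc1, hn'eq.symm, hsol2⟩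
    · -- otherwise nothing is dominated: contradiction with `hstep`
      exfalso
      push_neg at hrd hcd
      apply hstep
      apply Prod.ext
      · apply Finset.Subset.antisymm (elim_fst_sub _)
        intro x hx
        exact mem_elim_fst.mpr ⟨hx, hrd x hx⟩
      · apply Finset.Subset.antisymm (elim_snd_sub _)
        intro y hy
        exact mem_elim_snd.mpr ⟨hy, hcd y hy⟩

end StrictDomProofs

/-- If an `m × n` game (with Row payoffs pairwise distinct within each column
and Column payoffs pairwise distinct within each row) is strict-dominance solvable, then for
every `m' ∈ {1,…,m}` and `n' ∈ {1,…,n}` there is a strict-dominance solvable `m' × n'`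
subgame. -/
theorem stmt19 (m n : ℕ) (hm : 1 ≤ m) (hn : 1 ≤ n)
    (R C : Fin m → Fin n → ℝ)
    (hR : ∀ j : Fin n, ∀ i i' : Fin m, i ≠ i' → R i j ≠ R i' j)
    (hC : ∀ i : Fin m, ∀ j j' : Fin n, j ≠ j' → C i j ≠ C i j')
    (hs : Solvable R C) :
    ∀ m' ∈ Finset.Icc 1 m, ∀ n' ∈ Finset.Icc 1 n,
      ∃ X : Finset (Fin m), ∃ Y : Finset (Fin n),
        X.card = m' ∧ Y.card = n' ∧ SolvableFrom R C (X, Y) := by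
  intro m' hm' n' hn'
  rw [Finset.mem_Icc] at hm' hn'
  have hs' : SolvableFrom R C (Finset.univ, Finset.univ) := hs
  obtain ⟨X, Y, _, _, hc1, hc2, hsol⟩ :=
    main_lemma R C (m + n) Finset.univ Finset.univ (by simp) hs' m' n'
      hm'.1 (by simpa using hm'.2) hn'.1 (by simpa using hn'.2)
  exact ⟨X, Y, hc1, hc2, hsol⟩
end
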